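/- arXiv:2202.09304 — 2 statements merged into one kernel-verified Lean document; each statement's English description precedes it below -/
import Mathlib

section
/- Let ν be a positive integer congruent to 8 or 14 modulo 24. Then there exist integers x, y, z, none divisible by 3, such that 2x² + 3y² + 3z² = ν. -/
/-! ### Helpers -/

private lemma sq_mod3 (w : ℤ) :
    w ^ 2 % 3 = 0 ∧ w % 3 = 0 ∨ w ^ 2 % 3 = 1 ∧ w % 3 ≠ 0 := by
  have h : w % 3 = 0 ∨ w % 3 = 1 ∨ w % 3 = 2 := by omega
  have key : w ^ 2 % 3 = (w % 3) ^ 2 % 3 := by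
    conv_lhs => rw [show w = 3 * (w / 3) + w % 3 by omega]
    ring_nf
    omega
  rcases h with h | h | h <;> rw [h] at key <;> norm_num at key <;> omega

private lemma round_half (g t : ℤ) (hg : 0 < g) :
    ∃ x : ℤ, 2 * (g * x + t) ≤ g ∧ -g ≤ 2 * (g * x + t) := by
  have h1 : g * (-(t / g)) + t = t % g := by rw [Int.emod_def]; ring
  have h2 : g * (-(t / g) - 1) + t = t % g - g := by rw [Int.emod_def]; ring
  have h3 : 0 ≤ t % g := Int.emod_nonneg t hg.ne'
  have h4 : t % g < g := Int.emod_lt_of_pos t hg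
  rcases le_or_gt (2 * (t % g)) g with h | h
  · exact ⟨-(t / g), by omega⟩
  · exact ⟨-(t / g) - 1, by omega⟩

/-! ### Binary forms -/

private def Bv (a h b y z : ℤ) : ℤ := a * y ^ 2 + 2 * h * y * z + b * z ^ 2

private lemma Bv_pos {a h b : ℤ} (ha : 0 < a) (hD : 0 < a * b - h ^ 2)
    (y z : ℤ) (hyz : ¬(y = 0 ∧ z = 0)) : 0 < Bv a h b y z := by
  have key : a * Bv a h b y z = (a * y + h * z) ^ 2 + (a * b - h ^ 2) * z ^ 2 := by
    unfold Bv; ring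
  by_contra hc
  push_neg at hc
  have h1 : a * Bv a h b y z ≤ 0 := mul_nonpos_of_nonneg_of_nonpos ha.le hc
  rcases eq_or_ne z 0 with hz | hz
  · subst hz
    have hy : y ≠ 0 := fun hy => hyz ⟨hy, rfl⟩
    have h4 : Bv a h b y 0 = a * y ^ 2 := by unfold Bv; ring
    have h2 : 0 < y ^ 2 := by positivity
    nlinarith
  · have h2 : 0 < z ^ 2 := by positivity
    nlinarith [sq_nonneg (a * y + h * z)]

private lemma binary_min {a h b : ℤ} (ha : 0 < a) (hD : 0 < a * b - h ^ 2) :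
    ∃ y z : ℤ, ¬(y = 0 ∧ z = 0) ∧
      ∀ y' z', ¬(y' = 0 ∧ z' = 0) → Bv a h b y z ≤ Bv a h b y' z' := by
  set S : Set ℕ := {k | ∃ y z, ¬(y = 0 ∧ z = 0) ∧ Bv a h b y z = (k : ℤ)} with hS
  have hne : S.Nonempty := by
    refine ⟨a.toNat, 1, 0, by simp, ?_⟩
    rw [Int.toNat_of_nonneg ha.le]; unfold Bv; ring
  obtain ⟨y, z, hnz, hval⟩ := Nat.sInf_mem hne
  refine ⟨y, z, hnz, fun y' z' hnz' => ?_⟩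
  have hpos := Bv_pos ha hD y' z' hnz'
  have hmem : (Bv a h b y' z').toNat ∈ S :=
    ⟨y', z', hnz', by rw [Int.toNat_of_nonneg hpos.le]⟩
  have := Nat.sInf_le hmem
  rw [hval]
  omega

private lemma binary_struct {a h b : ℤ} (ha : 0 < a) (hD : 0 < a * b - h ^ 2) :
    ∃ y₀ z₀ e f : ℤ,
      y₀ * f - z₀ * e = 1 ∧
      0 < Bv a h b y₀ z₀ ∧
      2 * |a * y₀ * e + h * (y₀ * f + e * z₀) + b * z₀ * f| ≤ Bv a h b y₀ z₀ ∧
      Bv a h b y₀ z₀ ≤ Bv a h b e f ∧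
      Bv a h b y₀ z₀ * Bv a h b e f -
        (a * y₀ * e + h * (y₀ * f + e * z₀) + b * z₀ * f) ^ 2 = a * b - h ^ 2 ∧
      (∀ y' z', ¬(y' = 0 ∧ z' = 0) → Bv a h b y₀ z₀ ≤ Bv a h b y' z') := by
  obtain ⟨y₀, z₀, hnz, hmin⟩ := binary_min ha hD
  set g := Bv a h b y₀ z₀ with hg
  have hgpos : 0 < g := Bv_pos ha hD y₀ z₀ hnz
  -- primitivity
  have hprim : Int.gcd y₀ z₀ = 1 := by
    set d : ℤ := (Int.gcd y₀ z₀ : ℤ) with hd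
    have hd0 : d ≠ 0 := by
      simp only [hd]
      rw [Int.natCast_ne_zero, ← Nat.pos_iff_ne_zero]
      rcases Classical.em (y₀ = 0) with hy | hy
      · exact Int.gcd_pos_of_ne_zero_right _ (fun hz => hnz ⟨hy, hz⟩)
      · exact Int.gcd_pos_of_ne_zero_left _ hy
    obtain ⟨y₁, hy₁⟩ : d ∣ y₀ := Int.gcd_dvd_left _ _
    obtain ⟨z₁, hz₁⟩ : d ∣ z₀ := Int.gcd_dvd_right _ _
    have hnz₁ : ¬(y₁ = 0 ∧ z₁ = 0) := by
      rintro ⟨rfl, rfl⟩; exact hnz ⟨by simp [hy₁], by simp [hz₁]⟩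
    have hsc : g = d ^ 2 * Bv a h b y₁ z₁ := by
      rw [hg, hy₁, hz₁]; unfold Bv; ring
    have hge := hmin y₁ z₁ hnz₁
    have h1 : 0 < Bv a h b y₁ z₁ := Bv_pos ha hD _ _ hnz₁
    have hd1 : d ^ 2 = 1 := by nlinarith [sq_nonneg d]
    have hdnn : 0 ≤ d := Int.natCast_nonneg _
    have : d = 1 := by nlinarith
    rw [hd] at this
    omega
  -- Bezout: second basis vector
  have hbez := Int.gcd_eq_gcd_ab y₀ z₀
  rw [hprim] at hbez
  set e₀ : ℤ := -Int.gcdB y₀ z₀ with he₀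
  set f₀ : ℤ := Int.gcdA y₀ z₀ with hf₀
  have hdet0 : y₀ * f₀ - z₀ * e₀ = 1 := by
    rw [he₀, hf₀]; push_cast at hbez; linarith [hbez]
  set β₀ : ℤ := a * y₀ * e₀ + h * (y₀ * f₀ + e₀ * z₀) + b * z₀ * f₀ with hβ₀
  obtain ⟨x, hx1, hx2⟩ := round_half g β₀ hgpos
  set e : ℤ := e₀ + x * y₀ with he
  set f : ℤ := f₀ + x * z₀ with hf
  have hdet : y₀ * f - z₀ * e = 1 := by rw [he, hf]; linear_combination hdet0
  have hβ : a * y₀ * e + h * (y₀ * f + e * z₀) + b * z₀ * f = g * x + β₀ := by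
    rw [he, hf, hβ₀, hg]; unfold Bv; ring
  have hnz' : ¬(e = 0 ∧ f = 0) := by
    rintro ⟨h1, h2⟩; rw [h1, h2] at hdet; simp at hdet
  have hle : g ≤ Bv a h b e f := hmin e f hnz'
  have hdetid : g * Bv a h b e f -
      (a * y₀ * e + h * (y₀ * f + e * z₀) + b * z₀ * f) ^ 2
      = (a * b - h ^ 2) * (y₀ * f - z₀ * e) ^ 2 := by
    rw [hg]; unfold Bv; ring
  refine ⟨y₀, z₀, e, f, hdet, hgpos, ?_, hle, ?_, hmin⟩
  · rw [hβ]
    rcases abs_cases (g * x + β₀) with ⟨h', _⟩ | ⟨h', _⟩ <;> omega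
  · rw [hdetid, hdet]; ring
/-! ### Ternary forms -/

private def Tv (a b c p r s x y z : ℤ) : ℤ :=
  a * x ^ 2 + b * y ^ 2 + c * z ^ 2 + 2 * (p * x * y + r * y * z + s * x * z)

private def Tdet (a b c p r s : ℤ) : ℤ :=
  a * b * c + 2 * p * r * s - a * r ^ 2 - b * s ^ 2 - c * p ^ 2

private def TSet (a b c p r s n : ℤ) : Prop :=
  ∃ x y z : ℤ, ¬(x = 0 ∧ y = 0 ∧ z = 0) ∧ Tv a b c p r s x y z = n

private def TEquiv (a b c p r s A B C P R S : ℤ) : Prop :=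
  ∀ n, TSet a b c p r s n ↔ TSet A B C P R S n

/-- Transform a ternary form by a unimodular change acting on coordinates (x,y). -/
private lemma block_xy (a b c p r s α β γ δ : ℤ) (hdet : α * δ - β * γ = 1) :
    (∀ x y z, Tv (a * α ^ 2 + b * γ ^ 2 + 2 * p * α * γ)
        (a * β ^ 2 + b * δ ^ 2 + 2 * p * β * δ) c
        (a * α * β + b * γ * δ + p * (α * δ + β * γ)) (r * δ + s * β) (r * γ + s * α) x y z
      = Tv a b c p r s (α * x + β * y) (γ * x + δ * y) z)
    ∧ TEquiv a b c p r s (a * α ^ 2 + b * γ ^ 2 + 2 * p * α * γ)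
        (a * β ^ 2 + b * δ ^ 2 + 2 * p * β * δ) c
        (a * α * β + b * γ * δ + p * (α * δ + β * γ)) (r * δ + s * β) (r * γ + s * α)
    ∧ Tdet (a * α ^ 2 + b * γ ^ 2 + 2 * p * α * γ)
        (a * β ^ 2 + b * δ ^ 2 + 2 * p * β * δ) c
        (a * α * β + b * γ * δ + p * (α * δ + β * γ)) (r * δ + s * β) (r * γ + s * α)
      = Tdet a b c p r s := by
  have hval : ∀ x y z, Tv (a * α ^ 2 + b * γ ^ 2 + 2 * p * α * γ)
        (a * β ^ 2 + b * δ ^ 2 + 2 * p * β * δ) c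
        (a * α * β + b * γ * δ + p * (α * δ + β * γ)) (r * δ + s * β) (r * γ + s * α) x y z
      = Tv a b c p r s (α * x + β * y) (γ * x + δ * y) z := by
    intro x y z; unfold Tv; ring
  refine ⟨hval, ?_, ?_⟩
  · intro n
    constructor
    · rintro ⟨x, y, z, hnz, hv⟩
      refine ⟨δ * x - β * y, -γ * x + α * y, z, ?_, ?_⟩
      · rintro ⟨h1, h2, h3⟩
        refine hnz ⟨?_, ?_, h3⟩
        · linear_combination α * h1 + β * h2 - x * hdet
        · linear_combination γ * h1 + δ * h2 - y * hdet
      · rw [hval]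
        have e1 : α * (δ * x - β * y) + β * (-γ * x + α * y) = x := by
          linear_combination x * hdet
        have e2 : γ * (δ * x - β * y) + δ * (-γ * x + α * y) = y := by
          linear_combination y * hdet
        rw [e1, e2]; exact hv
    · rintro ⟨x, y, z, hnz, hv⟩
      rw [hval] at hv
      refine ⟨α * x + β * y, γ * x + δ * y, z, ?_, hv⟩
      rintro ⟨h1, h2, h3⟩
      refine hnz ⟨?_, ?_, h3⟩
      · linear_combination δ * h1 - β * h2 - x * hdet
      · linear_combination -γ * h1 + α * h2 - y * hdet
  · have H : Tdet (a * α ^ 2 + b * γ ^ 2 + 2 * p * α * γ)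
        (a * β ^ 2 + b * δ ^ 2 + 2 * p * β * δ) c
        (a * α * β + b * γ * δ + p * (α * δ + β * γ)) (r * δ + s * β) (r * γ + s * α)
        = Tdet a b c p r s * (α * δ - β * γ) ^ 2 := by
      unfold Tdet; ring
    rw [H, hdet]; ring
/-- Transform acting on coordinates (y,z). -/
private lemma block_yz (a b c p r s α β γ δ : ℤ) (hdet : α * δ - β * γ = 1) :
    (∀ x y z, Tv a (b * α ^ 2 + c * γ ^ 2 + 2 * r * α * γ)
        (b * β ^ 2 + c * δ ^ 2 + 2 * r * β * δ)
        (p * α + s * γ) (b * α * β + c * γ * δ + r * (α * δ + β * γ)) (p * β + s * δ) x y z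
      = Tv a b c p r s x (α * y + β * z) (γ * y + δ * z))
    ∧ TEquiv a b c p r s a (b * α ^ 2 + c * γ ^ 2 + 2 * r * α * γ)
        (b * β ^ 2 + c * δ ^ 2 + 2 * r * β * δ)
        (p * α + s * γ) (b * α * β + c * γ * δ + r * (α * δ + β * γ)) (p * β + s * δ)
    ∧ Tdet a (b * α ^ 2 + c * γ ^ 2 + 2 * r * α * γ)
        (b * β ^ 2 + c * δ ^ 2 + 2 * r * β * δ)
        (p * α + s * γ) (b * α * β + c * γ * δ + r * (α * δ + β * γ)) (p * β + s * δ)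
      = Tdet a b c p r s := by
  have hval : ∀ x y z, Tv a (b * α ^ 2 + c * γ ^ 2 + 2 * r * α * γ)
        (b * β ^ 2 + c * δ ^ 2 + 2 * r * β * δ)
        (p * α + s * γ) (b * α * β + c * γ * δ + r * (α * δ + β * γ)) (p * β + s * δ) x y z
      = Tv a b c p r s x (α * y + β * z) (γ * y + δ * z) := by
    intro x y z; unfold Tv; ring
  refine ⟨hval, ?_, ?_⟩
  · intro n
    constructor
    · rintro ⟨x, y, z, hnz, hv⟩
      refine ⟨x, δ * y - β * z, -γ * y + α * z, ?_, ?_⟩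
      · rintro ⟨h1, h2, h3⟩
        refine hnz ⟨h1, ?_, ?_⟩
        · linear_combination α * h2 + β * h3 - y * hdet
        · linear_combination γ * h2 + δ * h3 - z * hdet
      · rw [hval]
        have e1 : α * (δ * y - β * z) + β * (-γ * y + α * z) = y := by
          linear_combination y * hdet
        have e2 : γ * (δ * y - β * z) + δ * (-γ * y + α * z) = z := by
          linear_combination z * hdet
        rw [e1, e2]; exact hv
    · rintro ⟨x, y, z, hnz, hv⟩
      rw [hval] at hv
      refine ⟨x, α * y + β * z, γ * y + δ * z, ?_, hv⟩
      rintro ⟨h1, h2, h3⟩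
      refine hnz ⟨h1, ?_, ?_⟩
      · linear_combination δ * h2 - β * h3 - y * hdet
      · linear_combination -γ * h2 + α * h3 - z * hdet
  · have H : Tdet a (b * α ^ 2 + c * γ ^ 2 + 2 * r * α * γ)
        (b * β ^ 2 + c * δ ^ 2 + 2 * r * β * δ)
        (p * α + s * γ) (b * α * β + c * γ * δ + r * (α * δ + β * γ)) (p * β + s * δ)
        = Tdet a b c p r s * (α * δ - β * γ) ^ 2 := by
      unfold Tdet; ring
    rw [H, hdet]; ring

/-- Transform acting on coordinates (x,z). -/
private lemma block_xz (a b c p r s α β γ δ : ℤ) (hdet : α * δ - β * γ = 1) :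
    (∀ x y z, Tv (a * α ^ 2 + c * γ ^ 2 + 2 * s * α * γ) b
        (a * β ^ 2 + c * δ ^ 2 + 2 * s * β * δ)
        (p * α + r * γ) (p * β + r * δ) (a * α * β + c * γ * δ + s * (α * δ + β * γ)) x y z
      = Tv a b c p r s (α * x + β * z) y (γ * x + δ * z))
    ∧ TEquiv a b c p r s (a * α ^ 2 + c * γ ^ 2 + 2 * s * α * γ) b
        (a * β ^ 2 + c * δ ^ 2 + 2 * s * β * δ)
        (p * α + r * γ) (p * β + r * δ) (a * α * β + c * γ * δ + s * (α * δ + β * γ))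
    ∧ Tdet (a * α ^ 2 + c * γ ^ 2 + 2 * s * α * γ) b
        (a * β ^ 2 + c * δ ^ 2 + 2 * s * β * δ)
        (p * α + r * γ) (p * β + r * δ) (a * α * β + c * γ * δ + s * (α * δ + β * γ))
      = Tdet a b c p r s := by
  have hval : ∀ x y z, Tv (a * α ^ 2 + c * γ ^ 2 + 2 * s * α * γ) b
        (a * β ^ 2 + c * δ ^ 2 + 2 * s * β * δ)
        (p * α + r * γ) (p * β + r * δ) (a * α * β + c * γ * δ + s * (α * δ + β * γ)) x y z
      = Tv a b c p r s (α * x + β * z) y (γ * x + δ * z) := by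
    intro x y z; unfold Tv; ring
  refine ⟨hval, ?_, ?_⟩
  · intro n
    constructor
    · rintro ⟨x, y, z, hnz, hv⟩
      refine ⟨δ * x - β * z, y, -γ * x + α * z, ?_, ?_⟩
      · rintro ⟨h1, h2, h3⟩
        refine hnz ⟨?_, h2, ?_⟩
        · linear_combination α * h1 + β * h3 - x * hdet
        · linear_combination γ * h1 + δ * h3 - z * hdet
      · rw [hval]
        have e1 : α * (δ * x - β * z) + β * (-γ * x + α * z) = x := by
          linear_combination x * hdet
        have e2 : γ * (δ * x - β * z) + δ * (-γ * x + α * z) = z := by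
          linear_combination z * hdet
        rw [e1, e2]; exact hv
    · rintro ⟨x, y, z, hnz, hv⟩
      rw [hval] at hv
      refine ⟨α * x + β * z, y, γ * x + δ * z, ?_, hv⟩
      rintro ⟨h1, h2, h3⟩
      refine hnz ⟨?_, h2, ?_⟩
      · linear_combination δ * h1 - β * h3 - x * hdet
      · linear_combination -γ * h1 + α * h3 - z * hdet
  · have H : Tdet (a * α ^ 2 + c * γ ^ 2 + 2 * s * α * γ) b
        (a * β ^ 2 + c * δ ^ 2 + 2 * s * β * δ)
        (p * α + r * γ) (p * β + r * δ) (a * α * β + c * γ * δ + s * (α * δ + β * γ))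
        = Tdet a b c p r s * (α * δ - β * γ) ^ 2 := by
      unfold Tdet; ring
    rw [H, hdet]; ring
private lemma TEquiv.trans {a b c p r s A B C P R S A' B' C' P' R' S' : ℤ}
    (h1 : TEquiv a b c p r s A B C P R S) (h2 : TEquiv A B C P R S A' B' C' P' R' S') :
    TEquiv a b c p r s A' B' C' P' R' S' := fun n => (h1 n).trans (h2 n)

private lemma tern_min {a b c p r s : ℤ}
    (hpos : ∀ x y z : ℤ, ¬(x = 0 ∧ y = 0 ∧ z = 0) → 0 < Tv a b c p r s x y z) :
    ∃ x y z : ℤ, ¬(x = 0 ∧ y = 0 ∧ z = 0) ∧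
      ∀ x' y' z', ¬(x' = 0 ∧ y' = 0 ∧ z' = 0) →
        Tv a b c p r s x y z ≤ Tv a b c p r s x' y' z' := by
  set S : Set ℕ := {k | ∃ x y z, ¬(x = 0 ∧ y = 0 ∧ z = 0) ∧ Tv a b c p r s x y z = (k : ℤ)}
    with hS
  have h1 : ¬((1:ℤ) = 0 ∧ (0:ℤ) = 0 ∧ (0:ℤ) = 0) := by simp
  have hne : S.Nonempty := by
    refine ⟨(Tv a b c p r s 1 0 0).toNat, 1, 0, 0, h1, ?_⟩
    rw [Int.toNat_of_nonneg (hpos 1 0 0 h1).le]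
  obtain ⟨x, y, z, hnz, hval⟩ := Nat.sInf_mem hne
  refine ⟨x, y, z, hnz, fun x' y' z' hnz' => ?_⟩
  have hp := hpos x' y' z' hnz'
  have hmem : (Tv a b c p r s x' y' z').toNat ∈ S :=
    ⟨x', y', z', hnz', by rw [Int.toNat_of_nonneg hp.le]⟩
  have := Nat.sInf_le hmem
  rw [hval]
  omega

/-- A primitive vector can be moved to `e₁` by unimodular transformations. -/
private lemma corner (a b c p r s w1 w2 w3 : ℤ)
    (hprim : Int.gcd w1 (Int.gcd w2 w3 : ℤ) = 1) :
    ∃ A B C P R S : ℤ, TEquiv a b c p r s A B C P R S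
      ∧ Tdet A B C P R S = Tdet a b c p r s
      ∧ A = Tv a b c p r s w1 w2 w3 := by
  rcases Classical.em (w2 = 0 ∧ w3 = 0) with ⟨hw2, hw3⟩ | hw23
  · subst hw2; subst hw3
    have h0 : Int.gcd w1 ((Int.gcd (0:ℤ) (0:ℤ) : ℤ)) = w1.natAbs := by
      norm_num
    rw [h0] at hprim
    have h1 : w1 = 1 ∨ w1 = -1 := by omega
    have hd : w1 * w1 - 0 * 0 = 1 := by rcases h1 with h | h <;> rw [h] <;> norm_num
    obtain ⟨hv, he, hdet⟩ := block_xy a b c p r s w1 0 0 w1 hd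
    exact ⟨_, _, _, _, _, _, he, hdet, by unfold Tv; ring⟩
  · set g : ℤ := (Int.gcd w2 w3 : ℤ) with hgdef
    have hgpos : 0 < g := by
      rw [hgdef]
      rcases Classical.em (w2 = 0) with h2 | h2
      · have h3 : w3 ≠ 0 := fun h3 => hw23 ⟨h2, h3⟩
        exact_mod_cast Int.gcd_pos_of_ne_zero_right w2 h3
      · exact_mod_cast Int.gcd_pos_of_ne_zero_left w3 h2
    obtain ⟨s₂, hs₂⟩ : g ∣ w2 := Int.gcd_dvd_left _ _
    obtain ⟨t₂, ht₂⟩ : g ∣ w3 := Int.gcd_dvd_right _ _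
    have hbez := Int.gcd_eq_gcd_ab w2 w3
    rw [← hgdef] at hbez
    have hst : s₂ * Int.gcdA w2 w3 - -Int.gcdB w2 w3 * t₂ = 1 := by
      have h4 : g * (s₂ * Int.gcdA w2 w3 - -Int.gcdB w2 w3 * t₂) = g * 1 := by
        linear_combination -hbez - Int.gcdA w2 w3 * hs₂ - Int.gcdB w2 w3 * ht₂
      exact mul_left_cancel₀ hgpos.ne' h4
    obtain ⟨hv1, he1, hdet1⟩ := block_yz a b c p r s s₂ (-Int.gcdB w2 w3) t₂
      (Int.gcdA w2 w3) hst
    -- second move on (x,y): move (w1, g) to e₁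
    have hbez2 := Int.gcd_eq_gcd_ab w1 g
    rw [hprim] at hbez2
    have hd2 : w1 * Int.gcdA w1 g - -Int.gcdB w1 g * g = 1 := by push_cast at hbez2; linarith
    obtain ⟨hv2, he2, hdet2⟩ := block_xy _ _ _ _ _ _ w1 (-Int.gcdB w1 g) g
      (Int.gcdA w1 g) hd2
    refine ⟨_, _, _, _, _, _, he1.trans he2, by rw [hdet2, hdet1], ?_⟩
    rw [hs₂, ht₂]
    unfold Tv
    ring
set_option maxHeartbeats 2000000 in
/-- Main classification: a positive definite integral ternary form of determinant 9
that never represents 2 mod 3 only takes values of the shape x²+3y²+3z². -/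
private theorem ternary_main {a b c p r s : ℤ} (hdet : Tdet a b c p r s = 9)
    (hpos : ∀ x y z : ℤ, ¬(x = 0 ∧ y = 0 ∧ z = 0) → 0 < Tv a b c p r s x y z)
    (h2 : ∀ x y z : ℤ, Tv a b c p r s x y z % 3 ≠ 2)
    {n : ℤ} (hn : TSet a b c p r s n) : ∃ x y z : ℤ, n = x ^ 2 + 3 * y ^ 2 + 3 * z ^ 2 := by
  classical
  obtain ⟨w1, w2, w3, hwnz, hwmin⟩ := tern_min hpos
  -- primitivity of the minimal vector
  have hprim : Int.gcd w1 (Int.gcd w2 w3 : ℤ) = 1 := by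
    set d : ℤ := (Int.gcd w1 (Int.gcd w2 w3 : ℤ) : ℤ) with hd
    have hd1 : d ∣ w1 := Int.gcd_dvd_left _ _
    have hd23 : d ∣ (Int.gcd w2 w3 : ℤ) := Int.gcd_dvd_right _ _
    have hd2 : d ∣ w2 := hd23.trans (Int.gcd_dvd_left _ _)
    have hd3 : d ∣ w3 := hd23.trans (Int.gcd_dvd_right _ _)
    obtain ⟨u1, hu1⟩ := hd1; obtain ⟨u2, hu2⟩ := hd2; obtain ⟨u3, hu3⟩ := hd3
    have hdnz : d ≠ 0 := by
      intro h0
      rw [h0] at hu1 hu2 hu3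
      exact hwnz ⟨by omega, by omega, by omega⟩
    have hunz : ¬(u1 = 0 ∧ u2 = 0 ∧ u3 = 0) := by
      rintro ⟨rfl, rfl, rfl⟩
      exact hwnz ⟨by omega, by omega, by omega⟩
    have hsc : Tv a b c p r s w1 w2 w3 = d ^ 2 * Tv a b c p r s u1 u2 u3 := by
      rw [hu1, hu2, hu3]; unfold Tv; ring
    have hge := hwmin u1 u2 u3 hunz
    have hup : 0 < Tv a b c p r s u1 u2 u3 := hpos u1 u2 u3 hunz
    have hdnn : (0:ℤ) ≤ d := by rw [hd]; exact Int.natCast_nonneg _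
    have hdge1 : 1 ≤ d := by omega
    have hd2le : d ^ 2 ≤ 1 := by nlinarith
    have : d = 1 := by nlinarith
    rw [hd] at this; exact_mod_cast this
  obtain ⟨A, B, C, P, R, S, hEq, hDet9, hAval⟩ := corner a b c p r s w1 w2 w3 hprim
  rw [hdet] at hDet9
  -- transfer facts
  have hTv0 : ∀ A' B' C' P' R' S' : ℤ, Tv A' B' C' P' R' S' 0 0 0 = 0 := by
    intro A' B' C' P' R' S'; unfold Tv; ring
  have hpos' : ∀ x y z : ℤ, ¬(x = 0 ∧ y = 0 ∧ z = 0) → 0 < Tv A B C P R S x y z := by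
    intro x y z hnz
    obtain ⟨x', y', z', hnz', hval'⟩ := (hEq _).mpr ⟨x, y, z, hnz, rfl⟩
    rw [← hval']; exact hpos _ _ _ hnz'
  have hmin' : ∀ x y z : ℤ, ¬(x = 0 ∧ y = 0 ∧ z = 0) →
      A ≤ Tv A B C P R S x y z := by
    intro x y z hnz
    obtain ⟨x', y', z', hnz', hval'⟩ := (hEq _).mpr ⟨x, y, z, hnz, rfl⟩
    rw [← hval', hAval]; exact hwmin _ _ _ hnz'
  have h2' : ∀ x y z : ℤ, Tv A B C P R S x y z % 3 ≠ 2 := by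
    intro x y z
    rcases Classical.em (x = 0 ∧ y = 0 ∧ z = 0) with ⟨rfl, rfl, rfl⟩ | hnz
    · rw [hTv0]; norm_num
    · obtain ⟨x', y', z', hnz', hval'⟩ := (hEq _).mpr ⟨x, y, z, hnz, rfl⟩
      rw [← hval']; exact h2 _ _ _
  have hn' : TSet A B C P R S n := (hEq n).mp hn
  have he100 : ¬((1:ℤ) = 0 ∧ (0:ℤ) = 0 ∧ (0:ℤ) = 0) := by simp
  have hTvA : Tv A B C P R S 1 0 0 = A := by unfold Tv; ring
  have hApos : 0 < A := by rw [← hTvA]; exact hpos' 1 0 0 he100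
  -- the completed-square binary form
  have key : ∀ x y z : ℤ, A * Tv A B C P R S x y z
      = (A * x + P * y + S * z) ^ 2 + Bv (A*B - P^2) (A*R - P*S) (A*C - S^2) y z := by
    intro x y z; unfold Tv Bv; ring
  have hdetH : (A*B - P^2) * (A*C - S^2) - (A*R - P*S) ^ 2 = A * 9 := by
    rw [← hDet9]; unfold Tdet; ring
  have hbpos : 0 < A*B - P^2 := by
    obtain ⟨xh, hxh1, hxh2⟩ := round_half A P hApos
    have hnz : ¬(xh = 0 ∧ (1:ℤ) = 0 ∧ (0:ℤ) = 0) := by simp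
    have hV := hmin' xh 1 0 hnz
    have hk := key xh 1 0
    have hBv : Bv (A*B - P^2) (A*R - P*S) (A*C - S^2) 1 0 = A*B - P^2 := by
      unfold Bv; ring
    rw [hBv] at hk
    have harg : A * xh + P * 1 + S * 0 = A * xh + P := by ring
    rw [harg] at hk
    nlinarith [sq_nonneg (A * xh + P), sq_nonneg (2*(A * xh + P))]
  have hdetHpos : 0 < (A*B - P^2) * (A*C - S^2) - (A*R - P*S) ^ 2 := by
    rw [hdetH]; positivity
  -- minimum of the binary form
  obtain ⟨y₀, z₀, e, f, hdet1, hgpos, hβb, hgb₂, hdetid, hgmin⟩ :=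
    binary_struct hbpos hdetHpos
  set hb := A*B - P^2 with hhb
  set hr := A*R - P*S with hhr
  set hc := A*C - S^2 with hhc
  set g := Bv hb hr hc y₀ z₀ with hgdef
  set β := hb * y₀ * e + hr * (y₀ * f + e * z₀) + hc * z₀ * f with hβdef
  set b₂ := Bv hb hr hc e f with hb₂def
  have hβsq : 4 * β ^ 2 ≤ g ^ 2 := by
    have h1 : (2 * |β|) ^ 2 ≤ g ^ 2 := by
      have : (0:ℤ) ≤ 2 * |β| := by positivity
      nlinarith [abs_nonneg β]
    rw [mul_pow, sq_abs] at h1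
    linarith
  have hgsq : 3 * g ^ 2 ≤ 36 * A := by
    nlinarith [hdetid, hgb₂, hdetH]
  -- A ≤ 2
  have hyz0 : ¬(y₀ = 0 ∧ z₀ = 0) := by
    rintro ⟨rfl, rfl⟩; simp at hdet1
  obtain ⟨x₁, hx₁1, hx₁2⟩ := round_half A (P * y₀ + S * z₀) hApos
  have hnz₁ : ¬(x₁ = 0 ∧ y₀ = 0 ∧ z₀ = 0) := by
    rintro ⟨h1', h2', h3'⟩; exact hyz0 ⟨h2', h3'⟩
  have hV₁ := hmin' x₁ y₀ z₀ hnz₁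
  have hk₁ := key x₁ y₀ z₀
  have h3A2 : 3 * A ^ 2 ≤ 4 * g := by
    nlinarith [sq_nonneg (2*(A * x₁ + P * y₀ + S * z₀))]
  have hA2 : A ≤ 2 := by
    nlinarith [hApos, mul_pos hApos hApos, mul_pos (mul_pos hApos hApos) hApos]
  have hA3 : A % 3 ≠ 2 := by rw [← hTvA]; exact h2' 1 0 0
  have hA1 : A = 1 := by omega
  subst hA1
  -- classify the binary complement: g = 3, β = 0, b₂ = 3
  have hBvval : ∀ y z : ℤ, ∃ x, Tv 1 B C P R S x y z = Bv hb hr hc y z := by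
    intro y z
    refine ⟨-(P*y + S*z), ?_⟩
    have := key (-(P*y + S*z)) y z
    simp only [one_mul] at this ⊢
    nlinarith [this]
  have hBvval1 : ∀ y z : ℤ, ∃ x, Tv 1 B C P R S x y z = 1 + Bv hb hr hc y z := by
    intro y z
    refine ⟨1 - (P*y + S*z), ?_⟩
    have := key (1 - (P*y + S*z)) y z
    simp only [one_mul] at this ⊢
    nlinarith [this]
  have hg2 : g % 3 ≠ 2 := by
    obtain ⟨x', hx'⟩ := hBvval y₀ z₀
    rw [← hgdef] at hx'
    rw [← hx']; exact h2' _ _ _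
  have hg1 : g % 3 ≠ 1 := by
    obtain ⟨x', hx'⟩ := hBvval1 y₀ z₀
    rw [← hgdef] at hx'
    have := h2' x' y₀ z₀
    rw [hx'] at this
    omega
  have hdet9 : g * b₂ - β ^ 2 = 9 := by rw [hdetid, hdetH]; ring
  have hg3 : g = 3 := by
    have hgsq' : 3 * g ^ 2 ≤ 36 := by linarith [hgsq]
    have : g ≤ 3 := by nlinarith
    omega
  have hβ01 : β = -1 ∨ β = 0 ∨ β = 1 := by
    rcases abs_cases β with ⟨h1', _⟩ | ⟨h1', _⟩ <;> omega
  have hβ0 : β = 0 := by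
    rcases hβ01 with h' | h' | h' <;> rw [h'] at hdet9 <;> rw [hg3] at hdet9 <;> omega
  have hb₂3 : b₂ = 3 := by rw [hg3, hβ0] at hdet9; omega
  -- extract the representation
  obtain ⟨X, Y, Z, hnzX, hvalX⟩ := hn'
  have hkX := key X Y Z
  simp only [one_mul] at hkX
  rw [hvalX] at hkX
  set u := f * Y - e * Z with hu
  set v := -z₀ * Y + y₀ * Z with hv
  have hY : y₀ * u + e * v = Y := by rw [hu, hv]; linear_combination Y * hdet1
  have hZ : z₀ * u + f * v = Z := by rw [hu, hv]; linear_combination Z * hdet1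
  have hBfin : Bv hb hr hc Y Z = 3 * u ^ 2 + 3 * v ^ 2 := by
    rw [← hY, ← hZ]
    have hg' : Bv hb hr hc y₀ z₀ = 3 := by rw [← hgdef]; exact hg3
    have hβ' : hb * y₀ * e + hr * (y₀ * f + e * z₀) + hc * z₀ * f = 0 := by
      rw [← hβdef]; exact hβ0
    have hb₂' : Bv hb hr hc e f = 3 := by rw [← hb₂def]; exact hb₂3
    unfold Bv at hg' hβ' hb₂' ⊢
    linear_combination u^2 * hg' + 2*u*v * hβ' + v^2 * hb₂'
  rw [hBfin] at hkX
  exact ⟨X + P * Y + S * Z, u, v, by linarith⟩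
private lemma pow2_mod3 : ∀ e : ℕ, (Even e ∧ 2^e % 3 = 1) ∨ (Odd e ∧ 2^e % 3 = 2) := by
  intro e
  induction e with
  | zero => exact Or.inl ⟨Even.zero, rfl⟩
  | succ k ih =>
    have hp : 2^(k+1) % 3 = (2^k % 3) * 2 % 3 := by
      rw [pow_succ, Nat.mul_mod]
    rcases ih with ⟨he, hv⟩ | ⟨he, hv⟩
    · exact Or.inr ⟨Even.add_one he, by omega⟩
    · exact Or.inl ⟨Odd.add_one he, by omega⟩

private lemma nt_prime (m : ℕ) (h12 : m % 12 = 4 ∨ m % 12 = 7) :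
    ∃ q : ℕ, q.Prime ∧ 12 * m < q ∧ 4 * m ∣ 3 * q + 1 := by
  have hm4 : 4 ≤ m := by omega
  haveI : NeZero (4 * m) := ⟨by omega⟩
  have h3u : IsUnit (3 : ZMod (4 * m)) := by
    have hc : ((3:ℕ) : ZMod (4 * m)) = (3 : ZMod (4 * m)) := by push_cast; ring
    rw [← hc, ZMod.isUnit_iff_coprime]
    refine (Nat.Prime.coprime_iff_not_dvd Nat.prime_three).mpr ?_
    omega
  have hiu : IsUnit (-(3 : ZMod (4 * m))⁻¹) := by
    refine IsUnit.neg (IsUnit.of_mul_eq_one 3 ?_)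
    have h1 := ZMod.mul_inv_of_unit (3 : ZMod (4 * m)) h3u
    linear_combination h1
  obtain ⟨q, hq_gt, hq_prime, hq_mod⟩ := Nat.forall_exists_prime_gt_and_eq_mod hiu (12 * m)
  refine ⟨q, hq_prime, hq_gt, ?_⟩
  have h0 : ((3 * q + 1 : ℕ) : ZMod (4 * m)) = 0 := by
    push_cast
    rw [hq_mod]
    have h1 := ZMod.mul_inv_of_unit (3 : ZMod (4 * m)) h3u
    linear_combination -h1
  exact (ZMod.natCast_eq_zero_iff _ _).mp h0

private lemma nt_symbol (m q : ℕ) (h12 : m % 12 = 4 ∨ m % 12 = 7)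
    (hq : q.Prime) (hgt : 12 * m < q) (hdvd : 4 * m ∣ 3 * q + 1) :
    IsSquare ((-(m:ℤ) : ℤ) : ZMod q) := by
  haveI : Fact q.Prime := ⟨hq⟩
  have hm4 : 4 ≤ m := by omega
  have hq2 : q ≠ 2 := by omega
  have hqodd : Odd q := hq.odd_of_ne_two hq2
  have hq4 : q % 4 = 1 := by
    have h4 : (4:ℕ) ∣ 3 * q + 1 := dvd_trans ⟨m, rfl⟩ hdvd
    omega
  obtain ⟨e, d, hd2, hde⟩ := Nat.exists_eq_pow_mul_and_not_dvd (n := m) (by omega) 2 (by norm_num)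
  have hdodd : Odd d := Nat.odd_iff.mpr (by omega)
  have hm3 : m % 3 = 1 := by omega
  have h33 : ¬ (3 ∣ d) := by
    intro h3d
    have h3m : 3 ∣ m := by rw [hde]; exact Dvd.dvd.mul_left h3d _
    omega
  have hd3 : (Even e ∧ d % 3 = 1) ∨ (Odd e ∧ d % 3 = 2) := by
    have hmm := Nat.mul_mod (2^e) d 3
    rw [← hde] at hmm
    rcases pow2_mod3 e with ⟨he, hv⟩ | ⟨he, hv⟩
    · exact Or.inl ⟨he, by rw [hv] at hmm; omega⟩
    · exact Or.inr ⟨he, by rw [hv] at hmm; omega⟩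
  have hgcd3 : Int.gcd (3:ℤ) (d:ℕ) = 1 := by
    have : Nat.Coprime 3 d := (Nat.Prime.coprime_iff_not_dvd Nat.prime_three).mpr h33
    simpa [Int.gcd] using this
  have hddvd : (d:ℤ) ∣ (3 * q + 1 : ℤ) := by
    have h1 : (d:ℕ) ∣ 4 * m := by
      rw [hde]; exact Dvd.dvd.mul_left (Dvd.dvd.mul_left dvd_rfl _) 4
    exact_mod_cast (h1.trans hdvd)
  -- χ₈ q is ±1
  have hqo2 : q % 2 = 1 := Nat.odd_iff.mp hqodd
  have hχ8 : ZMod.χ₈ (q : ZMod 8) = 1 ∨ ZMod.χ₈ (q : ZMod 8) = -1 := by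
    have hv := ZMod.χ₈_nat_eq_if_mod_eight q
    rw [hv]
    split_ifs with h1' h2'
    · omega
    · exact Or.inl rfl
    · exact Or.inr rfl
  have hL : legendreSym q (-(m:ℤ)) = 1 := by
    have hsplit : (-(m:ℤ)) = (-1) * (2:ℤ)^e * (d:ℤ) := by
      push_cast [hde]; ring
    rw [hsplit, legendreSym.mul, legendreSym.mul]
    have hL1 : legendreSym q (-1) = 1 := by
      rw [legendreSym.at_neg_one hq2]; exact ZMod.χ₄_nat_one_mod_four hq4
    have hL2 : legendreSym q ((2:ℤ)^e) = (ZMod.χ₈ (q : ZMod 8))^e := by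
      rw [jacobiSym.legendreSym.to_jacobiSym, jacobiSym.pow_left, jacobiSym.at_two hqodd]
    have hLd : legendreSym q (d:ℤ) = jacobiSym (q:ℤ) d := by
      rw [jacobiSym.legendreSym.to_jacobiSym]
      exact (jacobiSym.quadratic_reciprocity_one_mod_four hq4 hdodd).symm
    have h9 : jacobiSym (q:ℤ) d = jacobiSym (-3 : ℤ) d := by
      have e2 : jacobiSym (9:ℤ) d = 1 := by
        rw [show (9:ℤ) = 3^2 by norm_num]
        exact jacobiSym.sq_one' hgcd3
      have e3 : jacobiSym (9 * q : ℤ) d = jacobiSym (-3:ℤ) d := by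
        apply jacobiSym.mod_left'
        have hdd : (d:ℤ) ∣ (-3) - 9 * q := by
          have : ((-3) - 9 * q : ℤ) = -3 * (3 * q + 1) + 0 := by ring
          rw [this, add_zero]
          exact Dvd.dvd.mul_left hddvd _
        exact Int.modEq_iff_dvd.mpr hdd
      have e1 : jacobiSym (9 * q : ℤ) d = jacobiSym (9:ℤ) d * jacobiSym (q:ℤ) d := jacobiSym.mul_left _ _ _
      rw [e1, e2, one_mul] at e3
      exact e3
    have hneg3 : jacobiSym (-3:ℤ) d = jacobiSym (d:ℤ) 3 := by
      rw [show (-3 : ℤ) = (-1) * 3 by norm_num, jacobiSym.mul_left,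
        jacobiSym.at_neg_one hdodd]
      have hd4 : d % 4 = 1 ∨ d % 4 = 3 := by omega
      rcases hd4 with h | h
      · rw [ZMod.χ₄_nat_one_mod_four h, one_mul]
        have := jacobiSym.quadratic_reciprocity_one_mod_four' (by decide : Odd 3) h
        exact_mod_cast this
      · rw [ZMod.χ₄_nat_three_mod_four h]
        have := jacobiSym.quadratic_reciprocity_three_mod_four
          (by norm_num : (3:ℕ) % 4 = 3) h
        push_cast at this ⊢
        rw [this]
        ring
    have hd3val : jacobiSym (d:ℤ) 3 = (if d % 3 = 1 then 1 else -1) := by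
      rw [jacobiSym.mod_left]
      have hc : (d:ℤ) % ((3:ℕ):ℤ) = ((d % 3 : ℕ) : ℤ) := by push_cast; norm_num
      rw [hc]
      rcases hd3 with ⟨_, h⟩ | ⟨_, h⟩
      · rw [h, if_pos rfl]; exact_mod_cast jacobiSym.one_left 3
      · rw [h, if_neg (by norm_num)]
        have h2 : ((2:ℕ):ℤ) = (2:ℤ) := by norm_num
        rw [h2, jacobiSym.at_two (by decide : Odd 3)]
        rw [ZMod.χ₈_nat_eq_if_mod_eight 3]
        norm_num
    rcases hd3 with ⟨he, hd1⟩ | ⟨he, hd1⟩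
    · rw [hL1, hL2, hLd, h9, hneg3, hd3val, if_pos hd1]
      rcases hχ8 with h | h
      · rw [h]; norm_num
      · rw [h, Even.neg_one_pow he]; norm_num
    · have h8 : 8 ∣ 3 * q + 1 := by
        obtain ⟨e', rfl⟩ := he
        have h81 : 8 ∣ 4 * m := ⟨2 ^ (2 * e') * d, by rw [hde]; ring⟩
        exact h81.trans hdvd
      have hq8 : q % 8 = 5 := by omega
      have hχ : ZMod.χ₈ (q : ZMod 8) = -1 := by
        rw [ZMod.χ₈_nat_eq_if_mod_eight q]
        have : ¬(q % 8 = 1 ∨ q % 8 = 7) := by omega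
        rw [if_neg (by omega), if_neg this]
      rw [hL1, hL2, hLd, h9, hneg3, hd3val, if_neg (by omega), hχ, Odd.neg_one_pow he]
      norm_num
  have hne : ((-(m:ℤ) : ℤ) : ZMod q) ≠ 0 := by
    rw [Ne, ZMod.intCast_zmod_eq_zero_iff_dvd]
    intro hdd
    rw [dvd_neg] at hdd
    have h1 : ((q:ℕ):ℤ) ∣ ((m:ℕ):ℤ) := hdd
    have h2 : (q:ℕ) ∣ m := by exact_mod_cast h1
    have := Nat.le_of_dvd (by omega) h2
    omega
  exact (legendreSym.eq_one_iff q hne).mp hL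
set_option maxHeartbeats 1600000 in
private lemma mu_rep (μ : ℤ) (hμ : 0 < μ) (h12 : μ % 12 = 4 ∨ μ % 12 = 7) :
    ∃ x u v : ℤ, μ = x ^ 2 + 3 * u ^ 2 + 3 * v ^ 2 := by
  set m := μ.toNat with hm
  have hmz : (m : ℤ) = μ := Int.toNat_of_nonneg hμ.le
  have h12' : m % 12 = 4 ∨ m % 12 = 7 := by omega
  obtain ⟨q, hq, hgt, hdvd⟩ := nt_prime m h12'
  have hsq := nt_symbol m q h12' hq hgt hdvd
  haveI : Fact q.Prime := ⟨hq⟩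
  obtain ⟨t, ht⟩ := hsq
  have hmne : ((m:ℤ) : ZMod q) ≠ 0 := by
    rw [Ne, ZMod.intCast_zmod_eq_zero_iff_dvd]
    intro hdd
    have h1 : (q:ℕ) ∣ m := by exact_mod_cast hdd
    have := Nat.le_of_dvd (by omega) h1
    omega
  have ht' : t * t = -(((m:ℤ) : ZMod q)) := by
    rw [← ht]; push_cast; ring
  set σZ : ZMod q := t * ((m:ℤ) : ZMod q)⁻¹ with hσZ
  have hkey : ((m:ℤ) : ZMod q) * σZ ^ 2 = -1 := by
    rw [hσZ]
    have hinv : ((m:ℤ) : ZMod q) * ((m:ℤ) : ZMod q)⁻¹ = 1 := mul_inv_cancel₀ hmne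
    calc ((m:ℤ) : ZMod q) * (t * ((m:ℤ) : ZMod q)⁻¹) ^ 2
        = (t * t) * ((m:ℤ) : ZMod q)⁻¹ * (((m:ℤ) : ZMod q) * ((m:ℤ) : ZMod q)⁻¹) := by
          ring
      _ = (t * t) * ((m:ℤ) : ZMod q)⁻¹ := by rw [hinv, mul_one]
      _ = -(((m:ℤ) : ZMod q) * ((m:ℤ) : ZMod q)⁻¹) := by rw [ht']; ring
      _ = -1 := by rw [hinv]
  set σ : ℤ := (σZ.val : ℤ) with hσ
  have hσcast : ((σ : ℤ) : ZMod q) = σZ := by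
    rw [hσ]
    push_cast
    exact ZMod.natCast_rightInverse σZ
  have hqdvd : (q:ℤ) ∣ 1 + (m:ℤ) * σ ^ 2 := by
    rw [← ZMod.intCast_zmod_eq_zero_iff_dvd]
    have hc : ((1 + (m:ℤ) * σ ^ 2 : ℤ) : ZMod q) = 1 + ((m:ℤ) : ZMod q) * ((σ : ℤ) : ZMod q) ^ 2 := by
      push_cast; ring
    rw [hc, hσcast]
    linear_combination hkey
  obtain ⟨τ, hτ⟩ := hqdvd
  have hτ' : (q:ℤ) * τ = 1 + (m:ℤ) * σ ^ 2 := hτ.symm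
  have hmdvd : ((m:ℤ)) ∣ 3 * (q:ℤ) + 1 := by
    have h1 : (m:ℕ) ∣ 3 * q + 1 := dvd_trans (dvd_mul_left m 4) hdvd
    exact_mod_cast h1
  obtain ⟨γ, hγ⟩ := hmdvd
  have hγ' : (m:ℤ) * γ = 3 * (q:ℤ) + 1 := hγ.symm
  have hM : (0:ℤ) < (m:ℤ) := by omega
  have hqZ : (0:ℤ) < (q:ℤ) := by
    have := hq.pos; omega
  have hγpos : 0 < γ := by nlinarith
  have hτpos : 0 < τ := by nlinarith [sq_nonneg σ]
  -- the ternary form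
  have hdet : Tdet (m:ℤ) γ (3*τ) 1 (3*σ) 0 = 9 := by
    unfold Tdet
    linear_combination (3*τ) * hγ' + 9 * hτ'
  have hident : ∀ x y z : ℤ, (q:ℤ) * (m:ℤ) * Tv (m:ℤ) γ (3*τ) 1 (3*σ) 0 x y z
      = (q:ℤ) * ((m:ℤ)*x + y)^2 + 3*((q:ℤ)*y + (m:ℤ)*σ*z)^2 + 3*(m:ℤ)*z^2 := by
    intro x y z
    unfold Tv
    linear_combination ((q:ℤ)*y^2) * hγ' + (3*(m:ℤ)*z^2) * hτ'
  have hpos : ∀ x y z : ℤ, ¬(x = 0 ∧ y = 0 ∧ z = 0) →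
      0 < Tv (m:ℤ) γ (3*τ) 1 (3*σ) 0 x y z := by
    intro x y z hnz
    by_contra hc
    push_neg at hc
    have h0 : (q:ℤ) * (m:ℤ) * Tv (m:ℤ) γ (3*τ) 1 (3*σ) 0 x y z ≤ 0 :=
      mul_nonpos_of_nonneg_of_nonpos (by positivity) hc
    rw [hident x y z] at h0
    have hz2 : z^2 ≤ 0 := by
      nlinarith [sq_nonneg ((m:ℤ)*x + y), sq_nonneg ((q:ℤ)*y + (m:ℤ)*σ*z),
        mul_nonneg hqZ.le (sq_nonneg ((m:ℤ)*x + y))]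
    have hz : z = 0 := by nlinarith [sq_nonneg z]
    subst hz
    have hy2 : ((q:ℤ)*y + (m:ℤ)*σ*0)^2 ≤ 0 := by
      nlinarith [mul_nonneg hqZ.le (sq_nonneg ((m:ℤ)*x + y))]
    have hy : y = 0 := by
      have h1 : ((q:ℤ)*y)^2 ≤ 0 := by nlinarith
      have h2 : (q:ℤ)*y = 0 := by nlinarith [sq_nonneg ((q:ℤ)*y)]
      have := hqZ.ne'
      exact (mul_eq_zero.mp h2).resolve_left this
    subst hy
    have hx2 : ((m:ℤ)*x + 0)^2 ≤ 0 := by nlinarith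
    have hx : x = 0 := by
      have h2 : (m:ℤ)*x = 0 := by nlinarith [sq_nonneg ((m:ℤ)*x)]
      exact (mul_eq_zero.mp h2).resolve_left hM.ne'
    exact hnz ⟨hx, rfl, rfl⟩
  have hm3 : (m:ℤ) % 3 = 1 := by omega
  obtain ⟨k, hk⟩ : ∃ k, (m:ℤ) = 3*k + 1 := ⟨(m:ℤ)/3, by omega⟩
  have hγ3 : γ = 3*((q:ℤ) - k*γ) + 1 := by linear_combination hγ' - γ * hk
  have h2 : ∀ x y z : ℤ, Tv (m:ℤ) γ (3*τ) 1 (3*σ) 0 x y z % 3 ≠ 2 := by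
    intro x y z
    have hdiff : Tv (m:ℤ) γ (3*τ) 1 (3*σ) 0 x y z - (x+y)^2
        = 3*(k*x^2 + ((q:ℤ) - k*γ)*y^2 + τ*z^2 + 2*σ*y*z) := by
      unfold Tv
      linear_combination x^2 * hk + y^2 * hγ3
    have hsq := sq_mod3 (x+y)
    omega
  have hTSet : TSet (m:ℤ) γ (3*τ) 1 (3*σ) 0 (m:ℤ) :=
    ⟨1, 0, 0, by simp, by unfold Tv; ring⟩
  obtain ⟨x, u, v, hx⟩ := ternary_main hdet hpos h2 hTSet
  exact ⟨x, u, v, by omega⟩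
private lemma sq_mod4 (w : ℤ) :
    (w % 2 = 0 ∧ w ^ 2 % 4 = 0) ∨ (w % 2 = 1 ∧ w ^ 2 % 4 = 1) := by
  rcases Int.even_or_odd w with ⟨j, hj⟩ | ⟨j, hj⟩
  · left
    have h : w ^ 2 = 4 * j ^ 2 := by rw [hj]; ring
    constructor <;> omega
  · right
    have h : w ^ 2 = 4 * (j ^ 2 + j) + 1 := by rw [hj]; ring
    constructor <;> omega

private lemma fix_pair (x t o : ℤ) (hpar : (x - t) % 2 = 0) (hx3 : x % 3 ≠ 0)
    (hbad : (t ^ 2 + o ^ 2) % 3 ≠ 1) :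
    ∃ X U V : ℤ, X ^ 2 + 3 * U ^ 2 + 3 * V ^ 2 = x ^ 2 + 3 * t ^ 2 + 3 * o ^ 2
      ∧ (U ^ 2 + V ^ 2) % 3 = 1 := by
  obtain ⟨k, hk⟩ : ∃ k, x = t + 2 * k := ⟨(x - t) / 2, by omega⟩
  rcases sq_mod3 o with ⟨ho2, ho3⟩ | ⟨ho2, ho3⟩
  · rcases sq_mod3 t with ⟨ht2, ht3⟩ | ⟨ht2, ht3⟩
    · refine ⟨k - t, t + k, o, by rw [hk]; ring, ?_⟩
      have hU : (t + k) % 3 ≠ 0 := by omega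
      rcases sq_mod3 (t + k) with ⟨h1, h2⟩ | ⟨h1, h2⟩ <;> omega
    · omega
  · rcases sq_mod3 t with ⟨ht2, ht3⟩ | ⟨ht2, ht3⟩
    · omega
    · rcases Classical.em ((x + t) % 3 = 0) with hs | hs
      · refine ⟨k - t, t + k, o, by rw [hk]; ring, ?_⟩
        have hU : (t + k) % 3 = 0 := by omega
        rcases sq_mod3 (t + k) with ⟨h1, h2⟩ | ⟨h1, h2⟩ <;> omega
      · have hxt : (x - t) % 3 = 0 := by
          have h1 : x % 3 = 1 ∨ x % 3 = 2 := by omega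
          have h2 : t % 3 = 1 ∨ t % 3 = 2 := by omega
          rcases h1 with h1 | h1 <;> rcases h2 with h2 | h2 <;> omega
        refine ⟨k + 2 * t, k, o, by rw [hk]; ring, ?_⟩
        have hU : k % 3 = 0 := by omega
        rcases sq_mod3 k with ⟨h1, h2⟩ | ⟨h1, h2⟩ <;> omega

private lemma fixup (μ x u v : ℤ) (h4 : μ % 4 = 0 ∨ μ % 4 = 3) (h3 : μ % 3 = 1)
    (heq : μ = x ^ 2 + 3 * u ^ 2 + 3 * v ^ 2) :
    ∃ X U V : ℤ, μ = X ^ 2 + 3 * U ^ 2 + 3 * V ^ 2 ∧ (U ^ 2 + V ^ 2) % 3 = 1 := by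
  rcases Classical.em ((u ^ 2 + v ^ 2) % 3 = 1) with hgood | hbad
  · exact ⟨x, u, v, heq, hgood⟩
  · have hx3 : x % 3 ≠ 0 := by
      rcases sq_mod3 x with ⟨h1, h2⟩ | ⟨h1, h2⟩
      · rcases sq_mod3 u with ⟨h3', h4'⟩ | ⟨h3', h4'⟩ <;>
          rcases sq_mod3 v with ⟨h5', h6'⟩ | ⟨h5', h6'⟩ <;> omega
      · exact h2
    have hpar : (x - u) % 2 = 0 ∨ (x - v) % 2 = 0 := by
      by_contra hc
      push_neg at hc
      obtain ⟨hc1, hc2⟩ := hc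
      rcases sq_mod4 x with ⟨hx2, hx4⟩ | ⟨hx2, hx4⟩ <;>
        rcases sq_mod4 u with ⟨hu2, hu4⟩ | ⟨hu2, hu4⟩ <;>
          rcases sq_mod4 v with ⟨hv2, hv4⟩ | ⟨hv2, hv4⟩ <;> omega
    rcases hpar with hp | hp
    · obtain ⟨X, U, V, hX1, hX2⟩ := fix_pair x u v hp hx3 (by omega)
      exact ⟨X, U, V, by omega, hX2⟩
    · obtain ⟨X, U, V, hX1, hX2⟩ := fix_pair x v u hp hx3 (by omega)
      exact ⟨X, U, V, by omega, hX2⟩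

theorem rep3_233 (ν : ℤ) (hpos : 0 < ν) (hmod : ν % 24 = 8 ∨ ν % 24 = 14) :
    ∃ x y z : ℤ, ¬ (3 ∣ x) ∧ ¬ (3 ∣ y) ∧ ¬ (3 ∣ z) ∧
      2 * x ^ 2 + 3 * y ^ 2 + 3 * z ^ 2 = ν := by
  obtain ⟨μ, hν⟩ : ∃ μ, ν = 2 * μ := ⟨ν / 2, by omega⟩
  have hμpos : 0 < μ := by omega
  have h12 : μ % 12 = 4 ∨ μ % 12 = 7 := by omega
  obtain ⟨x₀, u₀, v₀, hrep⟩ := mu_rep μ hμpos h12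
  obtain ⟨X, U, V, hrep2, hUV⟩ := fixup μ x₀ u₀ v₀ (by omega) (by omega) hrep
  refine ⟨X, U + V, U - V, ?_, ?_, ?_, ?_⟩
  · intro h3X
    have hX0 : X % 3 = 0 := by omega
    rcases sq_mod3 X with ⟨h1, h2⟩ | ⟨h1, h2⟩ <;> omega
  · intro h3y
    have hy : (U + V) % 3 = 0 := by omega
    rcases sq_mod3 U with ⟨hU1, hU2⟩ | ⟨hU1, hU2⟩ <;>
      rcases sq_mod3 V with ⟨hV1, hV2⟩ | ⟨hV1, hV2⟩ <;> omega
  · intro h3z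
    have hz : (U - V) % 3 = 0 := by omega
    rcases sq_mod3 U with ⟨hU1, hU2⟩ | ⟨hU1, hU2⟩ <;>
      rcases sq_mod3 V with ⟨hV1, hV2⟩ | ⟨hV1, hV2⟩ <;> omega
  · linear_combination (-2) * hrep2 - hν
end

section
/- The quaternary octagonal form p₈(2,2,3,3) represents every positive integer u satisfying u ≢ 1 (mod 4) and u ∉ {11, 14}; that is, for every such u there exist integers x₁, x₂, x₃, x₄ with 2P₈(x₁) + 2P₈(x₂) + 3P₈(x₃) + 3P₈(x₄) = u. -/
/-- The generalized octagonal number `P₈(x) = 3x² - 2x`. -/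
def P8 (x : ℤ) : ℤ := 3 * x ^ 2 - 2 * x

namespace Oct

/-! ### Quadratic form basics.
`Q3 a b c d e f` is the ternary quadratic form with Gram matrix
`[[a,d,e],[d,b,f],[e,f,c]]`; `det3` its determinant.
`Q2 a b c` is the binary form with Gram matrix `[[a,b],[b,c]]`. -/

def Q3 (a b c d e f x y z : ℤ) : ℤ :=
  a*x^2 + b*y^2 + c*z^2 + 2*(d*x*y + e*x*z + f*y*z)

def det3 (a b c d e f : ℤ) : ℤ := a*b*c + 2*d*e*f - a*f^2 - b*e^2 - c*d^2

def Q2 (a b c x y : ℤ) : ℤ := a*x^2 + 2*b*x*y + c*y^2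

/-- bilinear form associated to `Q3`. -/
def B3 (a b c d e f x₁ y₁ z₁ x₂ y₂ z₂ : ℤ) : ℤ :=
  a*x₁*x₂ + b*y₁*y₂ + c*z₁*z₂ + d*(x₁*y₂+x₂*y₁) + e*(x₁*z₂+x₂*z₁) + f*(y₁*z₂+y₂*z₁)

def PD3 (a b c d e f : ℤ) : Prop :=
  ∀ x y z : ℤ, ¬(x = 0 ∧ y = 0 ∧ z = 0) → 1 ≤ Q3 a b c d e f x y z

def PD2 (a b c : ℤ) : Prop :=
  ∀ x y : ℤ, ¬(x = 0 ∧ y = 0) → 1 ≤ Q2 a b c x y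

def Rep3 (a b c d e f k : ℤ) : Prop := ∃ x y z : ℤ, Q3 a b c d e f x y z = k

def Rep2 (a b c k : ℤ) : Prop := ∃ x y : ℤ, Q2 a b c x y = k

/-! ### Change of basis -/

section Trans

variable (a b c d e f : ℤ) (p₁ p₂ p₃ q₁ q₂ q₃ r₁ r₂ r₃ : ℤ)

/-- determinant of the change-of-basis matrix with *columns*
`(p₁,p₂,p₃), (q₁,q₂,q₃), (r₁,r₂,r₃)`. -/
def mdet : ℤ :=
  p₁*(q₂*r₃ - q₃*r₂) - q₁*(p₂*r₃ - p₃*r₂) + r₁*(p₂*q₃ - p₃*q₂)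

-- new Gram entries
def nA : ℤ := Q3 a b c d e f p₁ p₂ p₃
def nB : ℤ := Q3 a b c d e f q₁ q₂ q₃
def nC : ℤ := Q3 a b c d e f r₁ r₂ r₃
def nD : ℤ := B3 a b c d e f p₁ p₂ p₃ q₁ q₂ q₃
def nE : ℤ := B3 a b c d e f p₁ p₂ p₃ r₁ r₂ r₃
def nF : ℤ := B3 a b c d e f q₁ q₂ q₃ r₁ r₂ r₃

lemma Q3_subst (x y z : ℤ) :
    Q3 a b c d e f (p₁*x + q₁*y + r₁*z) (p₂*x + q₂*y + r₂*z) (p₃*x + q₃*y + r₃*z)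
      = Q3 (nA a b c d e f p₁ p₂ p₃) (nB a b c d e f q₁ q₂ q₃) (nC a b c d e f r₁ r₂ r₃)
          (nD a b c d e f p₁ p₂ p₃ q₁ q₂ q₃) (nE a b c d e f p₁ p₂ p₃ r₁ r₂ r₃)
          (nF a b c d e f q₁ q₂ q₃ r₁ r₂ r₃) x y z := by
  simp only [Q3, nA, nB, nC, nD, nE, nF, B3]; ring

lemma det3_subst :
    det3 (nA a b c d e f p₁ p₂ p₃) (nB a b c d e f q₁ q₂ q₃) (nC a b c d e f r₁ r₂ r₃)
          (nD a b c d e f p₁ p₂ p₃ q₁ q₂ q₃) (nE a b c d e f p₁ p₂ p₃ r₁ r₂ r₃)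
          (nF a b c d e f q₁ q₂ q₃ r₁ r₂ r₃)
      = det3 a b c d e f * (mdet p₁ p₂ p₃ q₁ q₂ q₃ r₁ r₂ r₃)^2 := by
  simp only [det3, nA, nB, nC, nD, nE, nF, B3, Q3, mdet]; ring

/-- If the change-of-basis matrix has determinant 1, vectors are in bijection. -/
lemma solve_vec (hdet : mdet p₁ p₂ p₃ q₁ q₂ q₃ r₁ r₂ r₃ = 1) (x y z : ℤ) :
    ∃ X Y Z : ℤ, p₁*X + q₁*Y + r₁*Z = x ∧ p₂*X + q₂*Y + r₂*Z = y ∧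
      p₃*X + q₃*Y + r₃*Z = z := by
  refine ⟨(q₂*r₃ - q₃*r₂)*x - (q₁*r₃ - q₃*r₁)*y + (q₁*r₂ - q₂*r₁)*z,
          -((p₂*r₃ - p₃*r₂)*x) + (p₁*r₃ - p₃*r₁)*y - (p₁*r₂ - p₂*r₁)*z,
          (p₂*q₃ - p₃*q₂)*x - (p₁*q₃ - p₃*q₁)*y + (p₁*q₂ - p₂*q₁)*z, ?_, ?_, ?_⟩
  · simp only [mdet] at hdet; linear_combination x * hdet
  · simp only [mdet] at hdet; linear_combination y * hdet
  · simp only [mdet] at hdet; linear_combination z * hdet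

end Trans

/-! ### Minima -/

lemma Q3_smul (a b c d e f g x y z : ℤ) :
    Q3 a b c d e f (g*x) (g*y) (g*z) = g^2 * Q3 a b c d e f x y z := by
  simp only [Q3]; ring

lemma exists_min3 (a b c d e f : ℤ) (h : PD3 a b c d e f) :
    ∃ x y z : ℤ, ¬(x = 0 ∧ y = 0 ∧ z = 0) ∧
      Int.gcd (Int.gcd x y) z = 1 ∧
      ∀ x' y' z' : ℤ, ¬(x' = 0 ∧ y' = 0 ∧ z' = 0) →
        Q3 a b c d e f x y z ≤ Q3 a b c d e f x' y' z' := by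
  classical
  set Pn : ℕ → Prop := fun n => ∃ x y z : ℤ,
    (¬(x = 0 ∧ y = 0 ∧ z = 0)) ∧ Q3 a b c d e f x y z = n with hPn
  have hex : ∃ n, Pn n := by
    refine ⟨(Q3 a b c d e f 1 0 0).toNat, 1, 0, 0, by simp, ?_⟩
    rw [Int.toNat_of_nonneg]; linarith [h 1 0 0 (by simp)]
  obtain ⟨x, y, z, hxyz, hval⟩ := Nat.find_spec hex
  set v : ℕ := Nat.find hex with hv
  have hmin : ∀ x' y' z' : ℤ, ¬(x' = 0 ∧ y' = 0 ∧ z' = 0) →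
      (v:ℤ) ≤ Q3 a b c d e f x' y' z' := by
    intro x' y' z' h'
    have h1 : 1 ≤ Q3 a b c d e f x' y' z' := h x' y' z' h'
    have hP : Pn (Q3 a b c d e f x' y' z').toNat :=
      ⟨x', y', z', h', (Int.toNat_of_nonneg (by linarith)).symm⟩
    have hle := Nat.find_le (h := hex) hP
    omega
  have hv1 : 1 ≤ (v:ℤ) := by rw [← hval]; exact h x y z hxyz
  set g : ℕ := Int.gcd (Int.gcd x y) z with hg
  have hdx : (g:ℤ) ∣ x := dvd_trans (Int.gcd_dvd_left _ _) (Int.gcd_dvd_left _ _)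
  have hdy : (g:ℤ) ∣ y := dvd_trans (Int.gcd_dvd_left _ _) (Int.gcd_dvd_right _ _)
  have hdz : (g:ℤ) ∣ z := Int.gcd_dvd_right _ _
  obtain ⟨x1, hx1⟩ := hdx
  obtain ⟨y1, hy1⟩ := hdy
  obtain ⟨z1, hz1⟩ := hdz
  have hg0 : g ≠ 0 := by
    intro h0
    rw [h0] at hx1 hy1 hz1
    exact hxyz ⟨by simpa using hx1, by simpa using hy1, by simpa using hz1⟩
  have h1nz : ¬(x1 = 0 ∧ y1 = 0 ∧ z1 = 0) := by
    rintro ⟨rfl, rfl, rfl⟩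
    exact hxyz ⟨by simpa using hx1, by simpa using hy1, by simpa using hz1⟩
  have hsc : Q3 a b c d e f x y z = (g:ℤ)^2 * Q3 a b c d e f x1 y1 z1 := by
    rw [hx1, hy1, hz1, Q3_smul]
  have hQ1 : (v:ℤ) ≤ Q3 a b c d e f x1 y1 z1 := hmin x1 y1 z1 h1nz
  have hgle : g = 1 := by
    rcases Nat.lt_or_ge g 2 with h2 | h2
    · omega
    · exfalso
      have h2' : (2:ℤ) ≤ (g:ℤ) := by exact_mod_cast h2
      have heq : (v:ℤ) = (g:ℤ)^2 * Q3 a b c d e f x1 y1 z1 := by rw [← hval, hsc]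
      have e1 : (g:ℤ)^2 * (v:ℤ) ≤ (g:ℤ)^2 * Q3 a b c d e f x1 y1 z1 :=
        mul_le_mul_of_nonneg_left hQ1 (by positivity)
      have e2 : 0 ≤ ((g:ℤ)^2 - 4) * (v:ℤ) :=
        mul_nonneg (by nlinarith) (by linarith)
      nlinarith [e1, e2, heq, hv1]
  exact ⟨x, y, z, hxyz, by rw [← hg, hgle], by rw [hval]; exact hmin⟩

lemma Q2_smul (a b c g x y : ℤ) :
    Q2 a b c (g*x) (g*y) = g^2 * Q2 a b c x y := by simp only [Q2]; ring

lemma exists_min2 (a b c : ℤ) (h : PD2 a b c) :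
    ∃ x y : ℤ, ¬(x = 0 ∧ y = 0) ∧ Int.gcd x y = 1 ∧
      ∀ x' y' : ℤ, ¬(x' = 0 ∧ y' = 0) → Q2 a b c x y ≤ Q2 a b c x' y' := by
  classical
  set Pn : ℕ → Prop := fun n => ∃ x y : ℤ,
    (¬(x = 0 ∧ y = 0)) ∧ Q2 a b c x y = n with hPn
  have hex : ∃ n, Pn n := by
    refine ⟨(Q2 a b c 1 0).toNat, 1, 0, by simp, ?_⟩
    rw [Int.toNat_of_nonneg]; linarith [h 1 0 (by simp)]
  obtain ⟨x, y, hxy, hval⟩ := Nat.find_spec hex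
  set v : ℕ := Nat.find hex with hv
  have hmin : ∀ x' y' : ℤ, ¬(x' = 0 ∧ y' = 0) → (v:ℤ) ≤ Q2 a b c x' y' := by
    intro x' y' h'
    have h1 : 1 ≤ Q2 a b c x' y' := h x' y' h'
    have hP : Pn (Q2 a b c x' y').toNat :=
      ⟨x', y', h', (Int.toNat_of_nonneg (by linarith)).symm⟩
    have hle := Nat.find_le (h := hex) hP
    omega
  have hv1 : 1 ≤ (v:ℤ) := by rw [← hval]; exact h x y hxy
  set g : ℕ := Int.gcd x y with hg
  obtain ⟨x1, hx1⟩ : (g:ℤ) ∣ x := Int.gcd_dvd_left _ _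
  obtain ⟨y1, hy1⟩ : (g:ℤ) ∣ y := Int.gcd_dvd_right _ _
  have hg0 : g ≠ 0 := by
    intro h0
    rw [h0] at hx1 hy1
    exact hxy ⟨by simpa using hx1, by simpa using hy1⟩
  have h1nz : ¬(x1 = 0 ∧ y1 = 0) := by
    rintro ⟨rfl, rfl⟩
    exact hxy ⟨by simpa using hx1, by simpa using hy1⟩
  have hQ1 : (v:ℤ) ≤ Q2 a b c x1 y1 := hmin x1 y1 h1nz
  have hgle : g = 1 := by
    rcases Nat.lt_or_ge g 2 with h2 | h2
    · omega
    · exfalso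
      have h2' : (2:ℤ) ≤ (g:ℤ) := by exact_mod_cast h2
      have heq : (v:ℤ) = (g:ℤ)^2 * Q2 a b c x1 y1 := by
        rw [← hval, hx1, hy1, Q2_smul]
      have e1 : (g:ℤ)^2 * (v:ℤ) ≤ (g:ℤ)^2 * Q2 a b c x1 y1 :=
        mul_le_mul_of_nonneg_left hQ1 (by positivity)
      have e2 : 0 ≤ ((g:ℤ)^2 - 4) * (v:ℤ) :=
        mul_nonneg (by nlinarith) (by linarith)
      nlinarith [e1, e2, heq, hv1]
  exact ⟨x, y, hxy, hgle, by rw [hval]; exact hmin⟩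

/-- completion of a primitive vector to a matrix of determinant 1 -/
lemma completion3 (v₁ v₂ v₃ : ℤ) (h : Int.gcd (Int.gcd v₁ v₂) v₃ = 1) :
    ∃ q₁ q₂ q₃ r₁ r₂ r₃ : ℤ, mdet v₁ v₂ v₃ q₁ q₂ q₃ r₁ r₂ r₃ = 1 := by
  rcases Nat.eq_zero_or_pos (Int.gcd v₁ v₂) with hg0 | hgpos
  · -- v₁ = v₂ = 0, v₃ = ±1
    obtain ⟨rfl, rfl⟩ : v₁ = 0 ∧ v₂ = 0 := Int.gcd_eq_zero_iff.mp hg0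
    have h3 : v₃.natAbs = 1 := by
      rw [hg0] at h; simpa using h
    have hv3 : v₃ = 1 ∨ v₃ = -1 := by omega
    rcases hv3 with rfl | rfl
    · exact ⟨1, 0, 0, 0, 1, 0, by simp [mdet]⟩
    · exact ⟨1, 0, 0, 0, -1, 0, by simp [mdet]⟩
  · set g : ℕ := Int.gcd v₁ v₂ with hg
    have hbez1 : (g:ℤ) = v₁ * Int.gcdA v₁ v₂ + v₂ * Int.gcdB v₁ v₂ :=
      Int.gcd_eq_gcd_ab v₁ v₂
    have hbez2' : ((Int.gcd (g:ℤ) v₃ : ℕ):ℤ)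
        = (g:ℤ) * Int.gcdA (g:ℤ) v₃ + v₃ * Int.gcdB (g:ℤ) v₃ := Int.gcd_eq_gcd_ab _ _
    set α := Int.gcdA v₁ v₂
    set β := Int.gcdB v₁ v₂
    set u := Int.gcdA (g:ℤ) v₃
    set w := Int.gcdB (g:ℤ) v₃
    have h2 : (g:ℤ) * u + v₃ * w = 1 := by
      rw [← hbez2']; exact_mod_cast congrArg (Nat.cast (R := ℤ)) h
    obtain ⟨V₁, hV₁⟩ : (g:ℤ) ∣ v₁ := Int.gcd_dvd_left _ _
    obtain ⟨V₂, hV₂⟩ : (g:ℤ) ∣ v₂ := Int.gcd_dvd_right _ _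
    have hgz : (g:ℤ) ≠ 0 := Int.natCast_ne_zero.mpr hgpos.ne'
    have expand : (g:ℤ) * (α * V₁ + β * V₂) = v₁ * α + v₂ * β := by
      rw [hV₁, hV₂]; ring
    have key : α * V₁ + β * V₂ = 1 := by
      apply mul_left_cancel₀ hgz
      rw [expand, mul_one]; exact hbez1.symm
    refine ⟨-β, α, 0, -(w*V₁), -(w*V₂), u, ?_⟩
    simp only [mdet]
    linear_combination u * hbez1.symm + (v₃*w) * key + h2

/-- rounding: approximate `-L/a` by an integer -/
lemma exists_round (a L : ℤ) (ha : 1 ≤ a) : ∃ t : ℤ, 2*|L + a*t| ≤ a := by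
  have h2a : (0:ℤ) < 2*a := by linarith
  set q := (2*L + a) / (2*a) with hq
  set r := (2*L + a) % (2*a) with hr
  have hdm : 2*a * q + r = 2*L + a := Int.mul_ediv_add_emod _ _
  have hr0 : 0 ≤ r := Int.emod_nonneg _ (by linarith)
  have hrlt : r < 2*a := Int.emod_lt_of_pos _ h2a
  refine ⟨-q, ?_⟩
  have h1 : 2*(L + a*(-q)) = r - a := by linarith
  have h2 : |2*(L + a*(-q))| ≤ a := by
    rw [h1, abs_le]; constructor <;> linarith
  calc 2*|L + a*(-q)| = |2*(L + a*(-q))| := by rw [abs_mul]; simp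
    _ ≤ a := h2

/-! ### Binary reduction -/

lemma Q2_subst (a b c p q r s x y : ℤ) :
    Q2 a b c (p*x + q*y) (r*x + s*y)
      = Q2 (Q2 a b c p r) (a*p*q + b*(p*s + q*r) + c*r*s) (Q2 a b c q s) x y := by
  simp only [Q2]; ring

lemma det2_subst (a b c p q r s : ℤ) :
    Q2 a b c p r * Q2 a b c q s - (a*p*q + b*(p*s + q*r) + c*r*s)^2
      = (a*c - b^2) * (p*s - q*r)^2 := by simp only [Q2]; ring

lemma rep2_iff (a b c p q r s : ℤ) (hdet : p*s - q*r = 1) (k : ℤ) :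
    Rep2 a b c k ↔
      Rep2 (Q2 a b c p r) (a*p*q + b*(p*s + q*r) + c*r*s) (Q2 a b c q s) k := by
  constructor
  · rintro ⟨x, y, hxy⟩
    refine ⟨s*x - q*y, -(r*x) + p*y, ?_⟩
    rw [← Q2_subst]
    have e1 : p*(s*x - q*y) + q*(-(r*x) + p*y) = x := by linear_combination x * hdet
    have e2 : r*(s*x - q*y) + s*(-(r*x) + p*y) = y := by linear_combination y * hdet
    rw [e1, e2]; exact hxy
  · rintro ⟨x, y, hxy⟩
    exact ⟨p*x + q*y, r*x + s*y, by rw [Q2_subst]; exact hxy⟩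

lemma binary_reduce (a b c : ℤ) (hpd : PD2 a b c) :
    ∃ a' b' c' : ℤ, (∀ k, Rep2 a b c k ↔ Rep2 a' b' c' k) ∧
      a'*c' - b'^2 = a*c - b^2 ∧ 0 < a' ∧ 2*|b'| ≤ a' ∧ a' ≤ c' ∧
      Rep2 a b c a' ∧ (∀ x y : ℤ, ¬(x = 0 ∧ y = 0) → a' ≤ Q2 a b c x y) := by
  obtain ⟨x, y, hxy, hgcd, hmin⟩ := exists_min2 a b c hpd
  have hbez : (1:ℤ) = x * Int.gcdA x y + y * Int.gcdB x y := by
    have := Int.gcd_eq_gcd_ab x y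
    rw [hgcd] at this; exact_mod_cast this
  set A := Int.gcdA x y
  set B := Int.gcdB x y
  set μ := Q2 a b c x y with hμ
  have hμ1 : 1 ≤ μ := hpd x y hxy
  set b1 := a*x*(-B) + b*(x*A + (-B)*y) + c*y*A with hb1
  obtain ⟨t, ht⟩ := exists_round μ b1 hμ1
  have hdet : x*(A + t*y) - (-B + t*x)*y = 1 := by linear_combination -hbez
  have hbeq : a*x*(-B + t*x) + b*(x*(A + t*y) + (-B + t*x)*y) + c*y*(A + t*y)
      = b1 + μ*t := by rw [hb1, hμ]; simp only [Q2]; ring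
  refine ⟨μ, b1 + μ*t, Q2 a b c (-B + t*x) (A + t*y), ?_, ?_, by linarith, ht, ?_,
    ⟨x, y, hμ.symm⟩, hmin⟩
  · intro k
    have h0 := rep2_iff a b c x (-B + t*x) y (A + t*y) hdet k
    rwa [hbeq, ← hμ] at h0
  · have hd := det2_subst a b c x (-B + t*x) y (A + t*y)
    rw [hdet] at hd
    calc μ * Q2 a b c (-B + t*x) (A + t*y) - (b1 + μ*t)^2
        = Q2 a b c x y * Q2 a b c (-B + t*x) (A + t*y)
            - (a*x*(-B + t*x) + b*(x*(A + t*y) + (-B + t*x)*y) + c*y*(A + t*y))^2 := by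
          rw [hbeq, ← hμ]
      _ = (a*c - b^2) * 1^2 := hd
      _ = a*c - b^2 := by ring
  · apply hmin
    rintro ⟨h1, h2⟩
    rw [h1, h2] at hdet
    simp at hdet

lemma binary_min_bound {a' b' c' : ℤ}
    (h1 : 0 < a') (h2 : 2*|b'| ≤ a') (h3 : a' ≤ c') :
    3*a'^2 ≤ 4*(a'*c' - b'^2) := by nlinarith [sq_abs b', abs_nonneg b']

/-! ### Transfers along change of basis -/

lemma rep3_iff (a b c d e f p₁ p₂ p₃ q₁ q₂ q₃ r₁ r₂ r₃ : ℤ)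
    (hdet : mdet p₁ p₂ p₃ q₁ q₂ q₃ r₁ r₂ r₃ = 1) (k : ℤ) :
    Rep3 a b c d e f k ↔
      Rep3 (nA a b c d e f p₁ p₂ p₃) (nB a b c d e f q₁ q₂ q₃) (nC a b c d e f r₁ r₂ r₃)
        (nD a b c d e f p₁ p₂ p₃ q₁ q₂ q₃) (nE a b c d e f p₁ p₂ p₃ r₁ r₂ r₃)
        (nF a b c d e f q₁ q₂ q₃ r₁ r₂ r₃) k := by
  constructor
  · rintro ⟨x, y, z, hxyz⟩
    obtain ⟨X, Y, Z, h1, h2, h3⟩ := solve_vec p₁ p₂ p₃ q₁ q₂ q₃ r₁ r₂ r₃ hdet x y z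
    refine ⟨X, Y, Z, ?_⟩
    rw [← Q3_subst, h1, h2, h3]; exact hxyz
  · rintro ⟨X, Y, Z, hXYZ⟩
    exact ⟨p₁*X + q₁*Y + r₁*Z, p₂*X + q₂*Y + r₂*Z, p₃*X + q₃*Y + r₃*Z,
      by rw [Q3_subst]; exact hXYZ⟩

lemma image_ne_zero (p₁ p₂ p₃ q₁ q₂ q₃ r₁ r₂ r₃ : ℤ)
    (hdet : mdet p₁ p₂ p₃ q₁ q₂ q₃ r₁ r₂ r₃ = 1) (X Y Z : ℤ)
    (hXYZ : ¬(X = 0 ∧ Y = 0 ∧ Z = 0)) :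
    ¬(p₁*X + q₁*Y + r₁*Z = 0 ∧ p₂*X + q₂*Y + r₂*Z = 0 ∧ p₃*X + q₃*Y + r₃*Z = 0) := by
  simp only [mdet] at hdet
  rintro ⟨h1, h2, h3⟩
  apply hXYZ
  refine ⟨?_, ?_, ?_⟩
  · linear_combination (q₂*r₃ - q₃*r₂)*h1 - (q₁*r₃ - q₃*r₁)*h2 + (q₁*r₂ - q₂*r₁)*h3 - X*hdet
  · linear_combination -((p₂*r₃ - p₃*r₂)*h1) + (p₁*r₃ - p₃*r₁)*h2 - (p₁*r₂ - p₂*r₁)*h3 - Y*hdet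
  · linear_combination (p₂*q₃ - p₃*q₂)*h1 - (p₁*q₃ - p₃*q₁)*h2 + (p₁*q₂ - p₂*q₁)*h3 - Z*hdet

lemma min3_of (a b c d e f p₁ p₂ p₃ q₁ q₂ q₃ r₁ r₂ r₃ : ℤ)
    (hdet : mdet p₁ p₂ p₃ q₁ q₂ q₃ r₁ r₂ r₃ = 1) (v : ℤ)
    (hmin : ∀ x y z : ℤ, ¬(x = 0 ∧ y = 0 ∧ z = 0) → v ≤ Q3 a b c d e f x y z) :
    ∀ X Y Z : ℤ, ¬(X = 0 ∧ Y = 0 ∧ Z = 0) →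
      v ≤ Q3 (nA a b c d e f p₁ p₂ p₃) (nB a b c d e f q₁ q₂ q₃) (nC a b c d e f r₁ r₂ r₃)
        (nD a b c d e f p₁ p₂ p₃ q₁ q₂ q₃) (nE a b c d e f p₁ p₂ p₃ r₁ r₂ r₃)
        (nF a b c d e f q₁ q₂ q₃ r₁ r₂ r₃) X Y Z := by
  intro X Y Z hXYZ
  rw [← Q3_subst]
  exact hmin _ _ _ (image_ne_zero p₁ p₂ p₃ q₁ q₂ q₃ r₁ r₂ r₃ hdet X Y Z hXYZ)

/-! ### Structure identities -/

lemma sub_identity (a b c d e f t y z : ℤ) :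
    a * Q3 a b c d e f t y z
      = (a*t + d*y + e*z)^2 + Q2 (a*b - d^2) (a*f - d*e) (a*c - e^2) y z := by
  simp only [Q3, Q2]; ring

lemma sub_det (a b c d e f : ℤ) :
    (a*b - d^2)*(a*c - e^2) - (a*f - d*e)^2 = a * det3 a b c d e f := by
  simp only [det3]; ring

lemma zmod8_beta1 : ∀ w y z : ZMod 8, w^2 + (2*y^2 + 2*(y*z) + 2*z^2) ≠ 5 := by decide

lemma zmod8_beta2 : ∀ w y z : ZMod 8, w^2 + (2*y^2 - 2*(y*z) + 2*z^2) ≠ 5 := by decide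

/-! ### Classification of positive definite ternary forms of determinant 3 -/

lemma reduce_step1 (a b c d e f : ℤ) (hdet : det3 a b c d e f = 3)
    (hpd : PD3 a b c d e f) :
    ∃ a1 b1 c1 d1 e1 f1 : ℤ,
      (∀ k, Rep3 a b c d e f k ↔ Rep3 a1 b1 c1 d1 e1 f1 k) ∧
      det3 a1 b1 c1 d1 e1 f1 = 3 ∧ 1 ≤ a1 ∧
      (∀ X Y Z : ℤ, ¬(X = 0 ∧ Y = 0 ∧ Z = 0) → a1 ≤ Q3 a1 b1 c1 d1 e1 f1 X Y Z) := by
  obtain ⟨v₁, v₂, v₃, hvnz, hvgcd, hvmin⟩ := exists_min3 a b c d e f hpd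
  obtain ⟨q₁, q₂, q₃, r₁, r₂, r₃, hP⟩ := completion3 v₁ v₂ v₃ hvgcd
  refine ⟨nA a b c d e f v₁ v₂ v₃, nB a b c d e f q₁ q₂ q₃, nC a b c d e f r₁ r₂ r₃,
    nD a b c d e f v₁ v₂ v₃ q₁ q₂ q₃, nE a b c d e f v₁ v₂ v₃ r₁ r₂ r₃,
    nF a b c d e f q₁ q₂ q₃ r₁ r₂ r₃,
    fun k => rep3_iff a b c d e f v₁ v₂ v₃ q₁ q₂ q₃ r₁ r₂ r₃ hP k, ?_, ?_, ?_⟩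
  · rw [det3_subst, hP, hdet]; ring
  · exact hpd v₁ v₂ v₃ hvnz
  · exact min3_of a b c d e f v₁ v₂ v₃ q₁ q₂ q₃ r₁ r₂ r₃ hP
      (Q3 a b c d e f v₁ v₂ v₃) hvmin

set_option maxHeartbeats 1600000 in
theorem ternary_values (a b c d e f : ℤ) (hdet : det3 a b c d e f = 3)
    (hpd : PD3 a b c d e f) (p m : ℤ) (hp : Rep3 a b c d e f p) (hp5 : p % 8 = 5)
    (hm : Rep3 a b c d e f m) : ∃ x y z : ℤ, x^2 + y^2 + 3*z^2 = m := by
  obtain ⟨a1, b1, c1, d1, e1, f1, hiff3, hdet1, ha1pos, hmin1⟩ :=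
    reduce_step1 a b c d e f hdet hpd
  -- the associated binary form S
  set Sa := a1*b1 - d1^2 with hSa
  set Sb := a1*f1 - d1*e1 with hSb
  set Sc := a1*c1 - e1^2 with hSc
  have hdetS : Sa*Sc - Sb^2 = 3*a1 := by
    rw [hSa, hSb, hSc, sub_det, hdet1]; ring
  have strongS : ∀ y z : ℤ, ¬(y = 0 ∧ z = 0) → 3*a1^2 ≤ 4 * Q2 Sa Sb Sc y z := by
    intro y z hyz
    obtain ⟨t, ht⟩ := exists_round a1 (d1*y + e1*z) ha1pos
    have hL : d1*y + e1*z + a1*t = a1*t + d1*y + e1*z := by ring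
    rw [hL] at ht
    set L := a1*t + d1*y + e1*z with hLdef
    have hq := hmin1 t y z (by tauto)
    have hid := sub_identity a1 b1 c1 d1 e1 f1 t y z
    rw [← hSa, ← hSb, ← hSc, ← hLdef] at hid
    have hsq : 4*L^2 ≤ a1^2 := by
      have h0 : (2*|L|)^2 ≤ a1^2 := by
        have h1 : 0 ≤ 2*|L| := by positivity
        nlinarith [ht]
      calc 4*L^2 = (2*|L|)^2 := by rw [mul_pow, sq_abs]; ring
        _ ≤ a1^2 := h0
    nlinarith [mul_le_mul_of_nonneg_left hq (by linarith : (0:ℤ) ≤ a1), hid, hsq]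
  clear_value Sa Sb Sc
  have hpdS : PD2 Sa Sb Sc := by
    intro y z hyz
    have := strongS y z hyz
    nlinarith [ha1pos]
  obtain ⟨μ, β, γ, hiffS, hdet2, hμpos, hβ, hμγ, hrepμ, hminS⟩ := binary_reduce Sa Sb Sc hpdS
  rw [hdetS] at hdet2
  -- a1 = 1
  have hstrμ : 3*a1^2 ≤ 4*μ := by
    obtain ⟨y0, z0, hy0⟩ := hrepμ
    have hynz : ¬(y0 = 0 ∧ z0 = 0) := by
      rintro ⟨rfl, rfl⟩
      simp [Q2] at hy0
      omega
    have := strongS y0 z0 hynz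
    rw [hy0] at this; exact this
  have hbb : 3*μ^2 ≤ 4*(3*a1) := by
    have := binary_min_bound hμpos hβ hμγ
    rwa [hdet2] at this
  have ha1 : a1 = 1 := by
    by_contra hne
    have h2a : 2 ≤ a1 := by omega
    have e2 : 9*a1^4 ≤ 16*μ^2 := by
      nlinarith [mul_nonneg (sub_nonneg.mpr hstrμ) (by positivity : (0:ℤ) ≤ 4*μ + 3*a1^2)]
    have e3 : 9*a1^4 ≤ 64*a1 := by linarith
    have e4 : 8 ≤ a1^3 := by nlinarith
    nlinarith [mul_le_mul_of_nonneg_right e4 (by linarith : (0:ℤ) ≤ a1)]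
  subst ha1
  -- split off the unary part
  have hsplit : ∀ k, Rep3 1 b1 c1 d1 e1 f1 k ↔ ∃ w j : ℤ, Rep2 Sa Sb Sc j ∧ w^2 + j = k := by
    intro k
    constructor
    · rintro ⟨x, y, z, hxyz⟩
      refine ⟨1*x + d1*y + e1*z, Q2 Sa Sb Sc y z, ⟨y, z, rfl⟩, ?_⟩
      have hid := sub_identity 1 b1 c1 d1 e1 f1 x y z
      rw [← hSa, ← hSb, ← hSc] at hid
      linarith [hid, hxyz]
    · rintro ⟨w, j, ⟨y, z, hyz⟩, hsum⟩
      refine ⟨w - d1*y - e1*z, y, z, ?_⟩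
      have hid := sub_identity 1 b1 c1 d1 e1 f1 (w - d1*y - e1*z) y z
      rw [← hSa, ← hSb, ← hSc] at hid
      have hww : (1*(w - d1*y - e1*z) + d1*y + e1*z) = w := by ring
      rw [hww] at hid
      have : Q2 Sa Sb Sc y z = j := hyz
      linarith [hid, hsum]
  -- μ = 1 or 2
  have hμ2 : μ ≤ 2 := by nlinarith
  interval_cases μ
  · -- μ = 1 : β = 0, γ = 3
    have hβ0 : β = 0 := by
      have h0 := abs_nonneg β
      have : |β| = 0 := by omega
      exact abs_eq_zero.mp this
    have hγ : γ = 3 := by rw [hβ0] at hdet2; linarith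
    have hm1 : Rep3 1 b1 c1 d1 e1 f1 m := (hiff3 m).mp hm
    obtain ⟨w, j, hj, hsum⟩ := (hsplit m).mp hm1
    obtain ⟨y', z', hyz'⟩ := (hiffS j).mp hj
    rw [hβ0, hγ] at hyz'
    refine ⟨w, y', z', ?_⟩
    simp only [Q2] at hyz'
    linarith [hyz', hsum]
  · -- μ = 2 : β = ±1, γ = 2 ; contradiction with p ≡ 5 mod 8
    exfalso
    have hβ1 : β = 1 ∨ β = -1 := by
      have h0 := abs_nonneg β
      have h1 : |β| ≤ 1 := by omega
      have h2 : β ≠ 0 := by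
        rintro rfl
        simp at hdet2
        omega
      rcases abs_le.mp h1 with ⟨hl, hr⟩
      omega
    have hγ : γ = 2 := by
      rcases hβ1 with rfl | rfl <;> nlinarith [hdet2]
    have hp1 : Rep3 1 b1 c1 d1 e1 f1 p := (hiff3 p).mp hp
    obtain ⟨w, j, hj, hsum⟩ := (hsplit p).mp hp1
    obtain ⟨y', z', hyz'⟩ := (hiffS j).mp hj
    rw [hγ] at hyz'
    have hkey : w^2 + (2*y'^2 + 2*β*(y'*z') + 2*z'^2) = p := by
      simp only [Q2] at hyz'
      rw [← hsum, ← hyz']; ring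
    obtain ⟨k, hk⟩ : ∃ k, p = 8*k + 5 := ⟨p / 8, by omega⟩
    have h5 : ((p : ℤ) : ZMod 8) = 5 := by
      rw [hk]; push_cast
      rw [show ((8:ZMod 8)) = 0 by decide]; ring
    rcases hβ1 with rfl | rfl
    · refine zmod8_beta1 (w : ZMod 8) (y' : ZMod 8) (z' : ZMod 8) ?_
      rw [← h5, ← hkey]; push_cast; ring
    · refine zmod8_beta2 (w : ZMod 8) (y' : ZMod 8) (z' : ZMod 8) ?_
      rw [← h5, ← hkey]; push_cast; ring

/-! ### The arithmetic construction -/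

lemma pd3_of_minors (a b c d e f : ℤ) (h1 : 1 ≤ a) (h2 : 1 ≤ a*b - d^2)
    (h3 : 1 ≤ det3 a b c d e f) : PD3 a b c d e f := by
  intro x y z hxyz
  by_contra hq
  push_neg at hq
  have hq0 : Q3 a b c d e f x y z ≤ 0 := by linarith
  have hid : (a*(a*b - d^2)) * Q3 a b c d e f x y z
      = (a*b - d^2)*(a*x + d*y + e*z)^2 + ((a*b - d^2)*y + (a*f - d*e)*z)^2
        + a * det3 a b c d e f * z^2 := by simp only [Q3, det3]; ring
  have t1 : 0 ≤ (a*b - d^2)*(a*x + d*y + e*z)^2 := by positivity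
  have t2 : 0 ≤ ((a*b - d^2)*y + (a*f - d*e)*z)^2 := sq_nonneg _
  have t3 : 0 ≤ a * det3 a b c d e f * z^2 := by positivity
  have hlhs : (a*(a*b - d^2)) * Q3 a b c d e f x y z ≤ 0 :=
    mul_nonpos_of_nonneg_of_nonpos (by nlinarith) hq0
  have hz2 : a * det3 a b c d e f * z^2 ≤ 0 := by linarith
  have hz : z = 0 := by
    have hzz : z^2 ≤ 0 := by
      nlinarith [mul_nonneg (by nlinarith : (0:ℤ) ≤ a * det3 a b c d e f - 1) (sq_nonneg z)]
    have h0 : z^2 = 0 := le_antisymm hzz (sq_nonneg z)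
    exact pow_eq_zero_iff two_ne_zero |>.mp h0
  subst hz
  have hy2 : ((a*b - d^2)*y + (a*f - d*e)*0)^2 ≤ 0 := by linarith
  have hy : y = 0 := by
    have h0 : ((a*b - d^2)*y)^2 = 0 := by
      have := sq_nonneg ((a*b - d^2)*y)
      simp only [mul_zero, add_zero] at hy2
      omega
    have h1' : (a*b - d^2)*y = 0 := pow_eq_zero_iff two_ne_zero |>.mp h0
    rcases mul_eq_zero.mp h1' with h | h
    · omega
    · exact h
  subst hy
  have hx2 : (a*b - d^2)*(a*x + d*0 + e*0)^2 ≤ 0 := by linarith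
  have hx : x = 0 := by
    have h0 : (a*x)^2 ≤ 0 := by
      have hax : a*x + d*0 + e*0 = a*x := by ring
      rw [hax] at hx2
      nlinarith [sq_nonneg (a*x)]
    have h1' : (a*x)^2 = 0 := le_antisymm h0 (sq_nonneg _)
    have h2' : a*x = 0 := pow_eq_zero_iff two_ne_zero |>.mp h1'
    rcases mul_eq_zero.mp h2' with h | h
    · omega
    · exact h
  exact hxyz ⟨hx, rfl, rfl⟩

set_option maxHeartbeats 1600000 in
/-- Main ternary theorem: every `n ≥ 2` with `n ≡ 2 mod 3` is `x² + y² + 3z²`. -/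
theorem ternary_rep (n : ℕ) (h2 : 2 ≤ n) (h3 : n % 3 = 2) :
    ∃ x y z : ℤ, x^2 + y^2 + 3*z^2 = (n:ℤ) := by
  have hn0 : n ≠ 0 := by omega
  have hn3 : ¬ 3 ∣ n := by omega
  -- 2-adic decomposition
  set k := n.factorization 2 with hk
  set mo := ordCompl[2] n with hmo
  have hmon : 2^k * mo = n := Nat.ordProj_mul_ordCompl_eq_self n 2
  have hmo_odd : ¬ 2 ∣ mo := Nat.not_dvd_ordCompl Nat.prime_two hn0
  have hmodvd : mo ∣ n := Nat.ordCompl_dvd n 2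
  have hmoodd : Odd mo := Nat.odd_iff.mpr (by omega)
  have h3mo : ¬ 3 ∣ mo := fun h => hn3 (h.trans hmodvd)
  -- ε = J(-3|mo)
  have hgcd3mo : Int.gcd (-3) (mo : ℤ) = 1 := by
    have h' : Nat.Coprime 3 mo := (Nat.Prime.coprime_iff_not_dvd Nat.prime_three).mpr h3mo
    simpa [Int.gcd] using h'
  set ε := jacobiSym (-3) mo with hε
  have hεpm : ε = 1 ∨ ε = -1 := jacobiSym.eq_one_or_neg_one hgcd3mo
  have hkpm : ((-1:ℤ))^k = 1 ∨ ((-1:ℤ))^k = -1 := by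
    rcases Nat.even_or_odd k with h | h
    · left; exact h.neg_one_pow
    · right; exact h.neg_one_pow
  -- choice of t
  have hJ1 : jacobiSym ((1:ℕ) : ℤ) 3 = 1 := by norm_num [jacobiSym.one_left]
  have hJ2 : jacobiSym ((2:ℕ) : ℤ) 3 = -1 := by
    have h' := jacobiSym.at_two (⟨1, by norm_num⟩ : Odd 3)
    rw [show (((2:ℕ)) : ℤ) = (2:ℤ) by norm_num, h']
    decide
  obtain ⟨t, ht12, hJt⟩ : ∃ t : ℕ, (t = 1 ∨ t = 2) ∧
      jacobiSym (t : ℤ) 3 * (((-1:ℤ))^k * ε) = 1 := by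
    rcases hkpm with hk1 | hk1 <;> rcases hεpm with he1 | he1
    · exact ⟨1, Or.inl rfl, by rw [hJ1, hk1, he1]; ring⟩
    · exact ⟨2, Or.inr rfl, by rw [hJ2, hk1, he1]; ring⟩
    · exact ⟨2, Or.inr rfl, by rw [hJ2, hk1, he1]; ring⟩
    · exact ⟨1, Or.inl rfl, by rw [hJ1, hk1, he1]; ring⟩
  have h3t : ¬ 3 ∣ t := by rcases ht12 with rfl | rfl <;> omega
  -- the residue r
  obtain ⟨M, hM⟩ : ∃ M, n*t = M := ⟨_, rfl⟩
  have hM1 : 1 ≤ M := by rw [← hM]; rcases ht12 with rfl | rfl <;> omega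
  have h3M : ¬ 3 ∣ M := by
    rw [← hM]
    intro h
    rcases (Nat.Prime.dvd_mul Nat.prime_three).mp h with h' | h'
    · exact hn3 h'
    · exact h3t h'
  set r := 8*M - 3 with hr
  have hr3 : r + 3 = 8*M := by omega
  have hrcop : Nat.Coprime r (24*n) := by
    by_contra hcop
    obtain ⟨q, hq, hqr, hqM⟩ := Nat.Prime.not_coprime_iff_dvd.mp hcop
    have hq3F : q = 3 → False := by
      rintro rfl
      have h3r : (3:ℕ) ∣ 8*M := hr3 ▸ Nat.dvd_add hqr (dvd_refl 3)
      rcases (Nat.Prime.dvd_mul Nat.prime_three).mp h3r with h | h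
      · omega
      · exact h3M h
    rcases (Nat.Prime.dvd_mul hq).mp hqM with h24 | hn
    · have h83 : q ∣ 8 * 3 := by norm_num at h24 ⊢; exact h24
      rcases (Nat.Prime.dvd_mul hq).mp h83 with h8 | h3'
      · have hq2 : q = 2 := by
          have h2' : q ∣ 2 := hq.dvd_of_dvd_pow (show q ∣ 2^3 by norm_num; exact h8)
          exact (Nat.prime_dvd_prime_iff_eq hq Nat.prime_two).mp h2'
        subst hq2
        obtain ⟨c, hc⟩ := hqr
        omega
      · exact hq3F ((Nat.prime_dvd_prime_iff_eq hq Nat.prime_three).mp h3')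
    · -- q ∣ n ⇒ q ∣ 8M ⇒ q ∣ 3
      have hqM' : q ∣ M := by rw [← hM]; exact Dvd.dvd.mul_right hn t
      have hq8M : q ∣ 8*M := Dvd.dvd.mul_left hqM' 8
      have hq3' : q ∣ 3 := by
        have := Nat.dvd_sub (hr3 ▸ hq8M : q ∣ r + 3) hqr
        simpa using this
      exact hq3F ((Nat.prime_dvd_prime_iff_eq hq Nat.prime_three).mp hq3')
  -- Dirichlet
  haveI : NeZero (24*n) := ⟨by omega⟩
  have hunit : IsUnit ((r : ℕ) : ZMod (24*n)) := (ZMod.isUnit_iff_coprime r (24*n)).mpr hrcop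
  obtain ⟨p, hpgt, hpp, hpr⟩ := Nat.forall_exists_prime_gt_and_eq_mod hunit (24*n)
  haveI : Fact p.Prime := ⟨hpp⟩
  have hpmod : p ≡ r [MOD 24*n] := (ZMod.natCast_eq_natCast_iff p r (24*n)).mp hpr
  -- congruences satisfied by p
  have h8n24 : (8*n) ∣ 24*n := ⟨3, by ring⟩
  have hpmod8n : p ≡ r [MOD 8*n] := Nat.ModEq.of_dvd h8n24 hpmod
  have h8ndvd : 8*n ∣ p + 3 := by
    have h1' : p + 3 ≡ r + 3 [MOD 8*n] := Nat.ModEq.add_right 3 hpmod8n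
    have h2' : (8*n) ∣ 8*M := by
      refine ⟨t, ?_⟩
      rw [← hM]; ring
    have h3' : p + 3 ≡ 0 [MOD 8*n] := by
      calc p + 3 ≡ r + 3 [MOD 8*n] := h1'
        _ = 8*M := hr3
        _ ≡ 0 [MOD 8*n] := (Nat.modEq_zero_iff_dvd).mpr h2'
    exact (Nat.modEq_zero_iff_dvd).mp h3'
  have hp8 : p % 8 = 5 := by
    obtain ⟨c, hc⟩ := h8ndvd
    have h8 : 8 ∣ p + 3 := ⟨n*c, by rw [hc]; ring⟩
    omega
  have hp4 : p % 4 = 1 := by omega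
  have hpodd : Odd p := by rw [Nat.odd_iff]; omega
  have hpmod3 : p ≡ t [MOD 3] := by
    have h324 : (3:ℕ) ∣ 24*n := ⟨8*n, by ring⟩
    have h1' : p ≡ r [MOD 3] := Nat.ModEq.of_dvd h324 hpmod
    have h2' : r % 3 = t % 3 := by
      have hMnt : 8*(n*t) = 8*M := by rw [hM]
      have : n % 3 = 2 := h3
      rcases ht12 with rfl | rfl <;> omega
    calc p ≡ r [MOD 3] := h1'
      _ ≡ t [MOD 3] := h2'
  -- p is large
  have hplarge : 24*n < p := hpgt
  have hpne2 : p ≠ 2 := by omega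
  -- D
  have hndvd : n ∣ p + 3 := dvd_trans ⟨8, by ring⟩ h8ndvd
  have hmodvd' : mo ∣ p + 3 := hmodvd.trans hndvd
  obtain ⟨D, hD⟩ := hndvd
  have hD1 : 1 ≤ D := by
    rcases Nat.eq_zero_or_pos D with rfl | h
    · omega
    · omega
  -- Jacobi symbol computation
  have hDn : ((n:ℤ)) * (D:ℤ) = (p:ℤ) + 3 := by exact_mod_cast hD.symm
  have hJn1 : jacobiSym (-(3*(n:ℤ))) p = 1 := by
    have hfact : (-(3*(n:ℤ))) = (-1) * (3 * ((2:ℤ)^k * (mo:ℤ))) := by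
      rw [show ((2:ℤ))^k * (mo:ℤ) = ((2^k * mo : ℕ) : ℤ) by push_cast; ring, hmon]
      ring
    rw [hfact, jacobiSym.mul_left, jacobiSym.mul_left, jacobiSym.mul_left,
      jacobiSym.pow_left]
    have hJm1 : jacobiSym (-1) p = 1 := by
      rw [jacobiSym.at_neg_one hpodd, ZMod.χ₄_nat_one_mod_four hp4]
    have hJ2' : jacobiSym 2 p = -1 := by
      rw [jacobiSym.at_two hpodd, ZMod.χ₈_nat_eq_if_mod_eight]
      simp [hp8, show p % 2 = 1 by omega]
    have hJmo : jacobiSym (mo:ℤ) p = ε := by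
      have hrec : jacobiSym (p:ℤ) mo = jacobiSym (mo:ℤ) p :=
        jacobiSym.quadratic_reciprocity_one_mod_four hp4 hmoodd
      rw [← hrec]
      have hmodq : ((p:ℤ)) % (mo:ℤ) = (-3) % (mo:ℤ) := by
        obtain ⟨c, hc⟩ : ((mo:ℕ):ℤ) ∣ ((p:ℤ) + 3) := by
          exact_mod_cast Int.natCast_dvd_natCast.mpr hmodvd'
        have hpc : (p:ℤ) = -3 + (mo:ℤ)*c := by linarith
        rw [hpc, Int.add_mul_emod_self_left]
      rw [jacobiSym.mod_left' hmodq, ← hε]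
    have hJ3' : jacobiSym 3 p = jacobiSym (t:ℤ) 3 := by
      have hrec := jacobiSym.quadratic_reciprocity_one_mod_four
        (a := p) (b := 3) hp4 ⟨1, by norm_num⟩
      have hcast : (((3:ℕ)):ℤ) = (3:ℤ) := by norm_num
      rw [hcast] at hrec
      rw [← hrec]
      have hmodq : ((p:ℤ)) % (((3:ℕ)):ℤ) = ((t:ℤ)) % (((3:ℕ)):ℤ) := by
        have h' := hpmod3
        unfold Nat.ModEq at h'
        push_cast
        omega
      exact jacobiSym.mod_left' hmodq
    rw [hJm1, hJ2', hJmo, hJ3']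
    linear_combination hJt
  -- transfer to -D
  have hpn : ¬ p ∣ n := fun h => absurd (Nat.le_of_dvd (by omega) h) (by omega)
  have hcopnp : Nat.Coprime n p :=
    Nat.Coprime.symm ((Nat.Prime.coprime_iff_not_dvd hpp).mpr hpn)
  have hgcdnp : Int.gcd ((n:ℕ):ℤ) (p:ℕ) = 1 := by
    simpa [Int.gcd] using hcopnp
  have hJD : jacobiSym (-(D:ℤ)) p = 1 := by
    have hmodq2 : (-(D:ℤ) * ((n:ℤ))^2) % ((p:ℕ):ℤ) = (-(3*(n:ℤ))) % ((p:ℕ):ℤ) := by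
      have hval2 : -(D:ℤ) * ((n:ℤ))^2 = -(3*(n:ℤ)) + ((p:ℕ):ℤ)*(-(n:ℤ)) := by
        linear_combination (-(n:ℤ)) * hDn
      rw [hval2, Int.add_mul_emod_self_left]
    have hstep : jacobiSym (-(D:ℤ) * ((n:ℤ))^2) p = 1 := by
      rw [jacobiSym.mod_left _ p, hmodq2, ← jacobiSym.mod_left]
      exact hJn1
    rw [jacobiSym.mul_left, jacobiSym.sq_one' hgcdnp, mul_one] at hstep
    exact hstep
  -- a square root of -D mod p
  have hsqD : IsSquare ((-(D:ℤ) : ℤ) : ZMod p) := ZMod.isSquare_of_jacobiSym_eq_one hJD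
  obtain ⟨s0, hs0⟩ := hsqD
  have hv : ((s0.val : ℕ) : ZMod p) = s0 := ZMod.natCast_rightInverse s0
  have hps : ((p:ℕ):ℤ) ∣ ((s0.val:ℤ)^2 + (D:ℤ)) := by
    rw [← ZMod.intCast_zmod_eq_zero_iff_dvd]
    push_cast
    rw [hv]
    rw [show (s0 : ZMod p)^2 = s0 * s0 by ring, ← hs0]
    push_cast
    ring
  set F : ℤ := (s0.val : ℤ) with hF
  obtain ⟨E, hE⟩ := hps
  have hppos : (0:ℤ) < (p:ℕ) := by exact_mod_cast hpp.pos
  have hE1 : 1 ≤ E := by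
    rcases le_or_gt 1 E with h | h
    · exact h
    · exfalso
      have hD1' : (1:ℤ) ≤ (D:ℤ) := by exact_mod_cast hD1
      nlinarith [sq_nonneg F, hE]
  -- build the ternary form and conclude
  have hdet3 : det3 (n:ℤ) E ((p:ℕ):ℤ) 1 0 F = 3 := by
    simp only [det3]
    linear_combination (-(n:ℤ)) * hE + hDn
  have hpd : PD3 (n:ℤ) E ((p:ℕ):ℤ) 1 0 F := by
    apply pd3_of_minors
    · exact_mod_cast (by omega : 1 ≤ n)
    · nlinarith [hE1, show (2:ℤ) ≤ (n:ℤ) by exact_mod_cast h2]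
    · rw [hdet3]; norm_num
  have hrepp : Rep3 (n:ℤ) E ((p:ℕ):ℤ) 1 0 F ((p:ℕ):ℤ) :=
    ⟨0, 0, 1, by simp only [Q3]; ring⟩
  have hrepn : Rep3 (n:ℤ) E ((p:ℕ):ℤ) 1 0 F ((n:ℕ):ℤ) :=
    ⟨1, 0, 0, by simp only [Q3]; ring⟩
  have hp5' : ((p:ℕ):ℤ) % 8 = 5 := by omega
  exact ternary_values (n:ℤ) E ((p:ℕ):ℤ) 1 0 F hdet3 hpd ((p:ℕ):ℤ) ((n:ℕ):ℤ)
    hrepp hp5' hrepn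

/-! ### Forcing lemmas and assembly -/

lemma cast_emod {q : ℕ} {x v : ℤ} (h : x % (q:ℤ) = v) :
    (x : ZMod q) = ((v:ℤ) : ZMod q) := by
  have hdvd : ((q:ℤ)) ∣ (x - v) := ⟨x / q, by linarith [Int.mul_ediv_add_emod x (q:ℤ)]⟩
  have h0 : ((x - v : ℤ) : ZMod q) = 0 := (ZMod.intCast_zmod_eq_zero_iff_dvd _ _).mpr hdvd
  push_cast at h0
  exact sub_eq_zero.mp h0

lemma zmod3_force : ∀ c d g : ZMod 3, c^2 + d^2 + 3*g^2 = 2 → ¬(c = 0) ∧ ¬(d = 0) := by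
  decide

lemma zmod4_force : ∀ c d g : ZMod 4, c^2 + d^2 + 3*g^2 = 2 → g = 0 ∨ g = 2 := by decide

lemma zmod8_force : ∀ c d g : ZMod 8, c^2 + d^2 + 3*g^2 = 1 →
    g = 0 ∨ g = 2 ∨ g = 4 ∨ g = 6 := by decide

lemma F3 (m c d g : ℤ) (hm : m % 3 = 2) (h : c^2 + d^2 + 3*g^2 = m) :
    ¬(3:ℤ) ∣ c ∧ ¬(3:ℤ) ∣ d := by
  have hcast : ((c:ZMod 3))^2 + (d:ZMod 3)^2 + 3*(g:ZMod 3)^2 = 2 := by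
    have h2 : ((m:ℤ) : ZMod 3) = ((2:ℤ) : ZMod 3) := cast_emod hm
    rw [← h] at h2
    push_cast at h2
    simpa only [Int.cast_add, Int.cast_mul, Int.cast_pow, Int.cast_ofNat, Int.cast_one] using h2
  have hcd := zmod3_force _ _ _ hcast
  constructor
  · exact fun hd => hcd.1 ((ZMod.intCast_zmod_eq_zero_iff_dvd c 3).mpr hd)
  · exact fun hd => hcd.2 ((ZMod.intCast_zmod_eq_zero_iff_dvd d 3).mpr hd)

lemma g_even (m c d g : ℤ) (h : c^2 + d^2 + 3*g^2 = m) (hm : m % 4 = 2 ∨ m % 8 = 1) :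
    g % 2 = 0 := by
  by_contra hodd
  rcases hm with hm | hm
  · have hcast : ((c:ZMod 4))^2 + (d:ZMod 4)^2 + 3*(g:ZMod 4)^2 = 2 := by
      have h2 : ((m:ℤ) : ZMod 4) = ((2:ℤ) : ZMod 4) := cast_emod hm
      rw [← h] at h2
      push_cast at h2
      simpa only [Int.cast_add, Int.cast_mul, Int.cast_pow, Int.cast_ofNat, Int.cast_one] using h2
    have hg := zmod4_force _ _ _ hcast
    have hg14 : (g:ZMod 4) = ((1:ℤ) : ZMod 4) ∨ (g:ZMod 4) = ((3:ℤ) : ZMod 4) := by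
      rcases (by omega : g % 4 = 1 ∨ g % 4 = 3) with h' | h'
      · exact Or.inl (cast_emod h')
      · exact Or.inr (cast_emod h')
    rcases hg with h0 | h0 <;> rcases hg14 with h1 | h1 <;>
      rw [h0] at h1 <;> revert h1 <;> decide
  · have hcast : ((c:ZMod 8))^2 + (d:ZMod 8)^2 + 3*(g:ZMod 8)^2 = 1 := by
      have h2 : ((m:ℤ) : ZMod 8) = ((1:ℤ) : ZMod 8) := cast_emod hm
      rw [← h] at h2
      push_cast at h2
      simpa only [Int.cast_add, Int.cast_mul, Int.cast_pow, Int.cast_ofNat, Int.cast_one] using h2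
    have hg := zmod8_force _ _ _ hcast
    have hg14 : (g:ZMod 8) = ((1:ℤ) : ZMod 8) ∨ (g:ZMod 8) = ((3:ℤ) : ZMod 8) ∨
        (g:ZMod 8) = ((5:ℤ) : ZMod 8) ∨ (g:ZMod 8) = ((7:ℤ) : ZMod 8) := by
      rcases (by omega : g % 8 = 1 ∨ g % 8 = 3 ∨ g % 8 = 5 ∨ g % 8 = 7) with h'|h'|h'|h'
      · exact Or.inl (cast_emod h')
      · exact Or.inr (Or.inl (cast_emod h'))
      · exact Or.inr (Or.inr (Or.inl (cast_emod h')))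
      · exact Or.inr (Or.inr (Or.inr (cast_emod h')))
    rcases hg with h0|h0|h0|h0 <;> rcases hg14 with h1|h1|h1|h1 <;>
      rw [h0] at h1 <;> revert h1 <;> decide

lemma exists_P8 (w : ℤ) (hw : ¬ (3:ℤ) ∣ w) : ∃ x : ℤ, 3 * P8 x = w^2 - 1 := by
  rcases (by omega : w % 3 = 1 ∨ w % 3 = 2) with h | h
  · obtain ⟨j, hj⟩ : ∃ j, w = 3*j + 1 := ⟨w/3, by omega⟩
    exact ⟨-j, by rw [hj]; simp only [P8]; ring⟩
  · obtain ⟨j, hj⟩ : ∃ j, w = 3*j + 2 := ⟨w/3, by omega⟩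
    exact ⟨j+1, by rw [hj]; simp only [P8]; ring⟩

lemma oct_of_good (u s g c d : ℤ) (h : 3*u + 10 = s^2 + 9*g^2 + 3*c^2 + 3*d^2)
    (hpar : (s - 3*g) % 2 = 0) (h3s : ¬(3:ℤ) ∣ s) (h3c : ¬(3:ℤ) ∣ c)
    (h3d : ¬(3:ℤ) ∣ d) :
    ∃ x₁ x₂ x₃ x₄ : ℤ, 2 * P8 x₁ + 2 * P8 x₂ + 3 * P8 x₃ + 3 * P8 x₄ = u := by
  obtain ⟨b, hb⟩ : (2:ℤ) ∣ (s - 3*g) := by omega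
  set a := b + 3*g with ha
  have hs : s = a + b := by omega
  have hag : a - b = 3*g := by omega
  have h3a : ¬(3:ℤ) ∣ a := by omega
  have h3b : ¬(3:ℤ) ∣ b := by omega
  obtain ⟨x₁, hx₁⟩ := exists_P8 a h3a
  obtain ⟨x₂, hx₂⟩ := exists_P8 b h3b
  obtain ⟨x₃, hx₃⟩ := exists_P8 c h3c
  obtain ⟨x₄, hx₄⟩ := exists_P8 d h3d
  refine ⟨x₁, x₂, x₃, x₄, ?_⟩
  have h3 : 3*(2 * P8 x₁ + 2 * P8 x₂ + 3 * P8 x₃ + 3 * P8 x₄) = 3*u := by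
    have e1 : 3*(2 * P8 x₁ + 2 * P8 x₂ + 3 * P8 x₃ + 3 * P8 x₄)
        = 2*(3*P8 x₁) + 2*(3*P8 x₂) + 3*(3*P8 x₃) + 3*(3*P8 x₄) := by ring
    rw [e1, hx₁, hx₂, hx₃, hx₄]
    linear_combination (-1)*h + (-(s+a+b))*hs + (a-b+3*g)*hag
  linarith

/-- weak representation: `N = s² + 9g² + 3c² + 3d²` with no parity condition. -/
lemma build_rep (N s S2 : ℤ) (hsq : s^2 = S2) (h9 : (N - S2) % 9 = 6)
    (h6 : S2 + 6 ≤ N) :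
    ∃ g c d m : ℤ, N = s^2 + 9*g^2 + 3*c^2 + 3*d^2 ∧ ¬(3:ℤ) ∣ c ∧ ¬(3:ℤ) ∣ d ∧
      c^2 + d^2 + 3*g^2 = m ∧ N - S2 = 3*m := by
  obtain ⟨m, hm⟩ : (3:ℤ) ∣ (N - S2) := by omega
  have hm3 : m % 3 = 2 := by omega
  have hm2 : 2 ≤ m := by omega
  obtain ⟨c, d, g, hcdg⟩ := ternary_rep m.toNat (by omega) (by omega)
  rw [show ((m.toNat : ℕ) : ℤ) = m from Int.toNat_of_nonneg (by omega)] at hcdg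
  have hF3 := F3 m c d g hm3 (by linarith)
  exact ⟨g, c, d, m, by rw [← hsq] at hm; linarith, hF3.1, hF3.2, by linarith, hm⟩


lemma tab_2 : ∃ x₁ x₂ x₃ x₄ : ℤ, 2 * P8 x₁ + 2 * P8 x₂ + 3 * P8 x₃ + 3 * P8 x₄ = 2 :=
  ⟨0, 1, 0, 0, by norm_num [P8]⟩

lemma tab_3 : ∃ x₁ x₂ x₃ x₄ : ℤ, 2 * P8 x₁ + 2 * P8 x₂ + 3 * P8 x₃ + 3 * P8 x₄ = 3 :=
  ⟨0, 0, 0, 1, by norm_num [P8]⟩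

lemma tab_4 : ∃ x₁ x₂ x₃ x₄ : ℤ, 2 * P8 x₁ + 2 * P8 x₂ + 3 * P8 x₃ + 3 * P8 x₄ = 4 :=
  ⟨1, 1, 0, 0, by norm_num [P8]⟩

lemma tab_6 : ∃ x₁ x₂ x₃ x₄ : ℤ, 2 * P8 x₁ + 2 * P8 x₂ + 3 * P8 x₃ + 3 * P8 x₄ = 6 :=
  ⟨0, 0, 1, 1, by norm_num [P8]⟩

lemma tab_7 : ∃ x₁ x₂ x₃ x₄ : ℤ, 2 * P8 x₁ + 2 * P8 x₂ + 3 * P8 x₃ + 3 * P8 x₄ = 7 :=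
  ⟨1, 1, 0, 1, by norm_num [P8]⟩

lemma tab_8 : ∃ x₁ x₂ x₃ x₄ : ℤ, 2 * P8 x₁ + 2 * P8 x₂ + 3 * P8 x₃ + 3 * P8 x₄ = 8 :=
  ⟨0, 1, 1, 1, by norm_num [P8]⟩

lemma tab_10 : ∃ x₁ x₂ x₃ x₄ : ℤ, 2 * P8 x₁ + 2 * P8 x₂ + 3 * P8 x₃ + 3 * P8 x₄ = 10 :=
  ⟨-1, 0, 0, 0, by norm_num [P8]⟩

lemma tab_12 : ∃ x₁ x₂ x₃ x₄ : ℤ, 2 * P8 x₁ + 2 * P8 x₂ + 3 * P8 x₃ + 3 * P8 x₄ = 12 :=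
  ⟨-1, 1, 0, 0, by norm_num [P8]⟩

lemma tab_15 : ∃ x₁ x₂ x₃ x₄ : ℤ, 2 * P8 x₁ + 2 * P8 x₂ + 3 * P8 x₃ + 3 * P8 x₄ = 15 :=
  ⟨-1, 1, 0, 1, by norm_num [P8]⟩

lemma tab_16 : ∃ x₁ x₂ x₃ x₄ : ℤ, 2 * P8 x₁ + 2 * P8 x₂ + 3 * P8 x₃ + 3 * P8 x₄ = 16 :=
  ⟨-1, 0, 1, 1, by norm_num [P8]⟩

lemma tab_18 : ∃ x₁ x₂ x₃ x₄ : ℤ, 2 * P8 x₁ + 2 * P8 x₂ + 3 * P8 x₃ + 3 * P8 x₄ = 18 :=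
  ⟨-1, 1, 1, 1, by norm_num [P8]⟩

lemma tab_19 : ∃ x₁ x₂ x₃ x₄ : ℤ, 2 * P8 x₁ + 2 * P8 x₂ + 3 * P8 x₃ + 3 * P8 x₄ = 19 :=
  ⟨0, 2, 0, 1, by norm_num [P8]⟩

lemma tab_20 : ∃ x₁ x₂ x₃ x₄ : ℤ, 2 * P8 x₁ + 2 * P8 x₂ + 3 * P8 x₃ + 3 * P8 x₄ = 20 :=
  ⟨-1, -1, 0, 0, by norm_num [P8]⟩

lemma tab_22 : ∃ x₁ x₂ x₃ x₄ : ℤ, 2 * P8 x₁ + 2 * P8 x₂ + 3 * P8 x₃ + 3 * P8 x₄ = 22 :=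
  ⟨0, 2, 1, 1, by norm_num [P8]⟩

lemma tab_23 : ∃ x₁ x₂ x₃ x₄ : ℤ, 2 * P8 x₁ + 2 * P8 x₂ + 3 * P8 x₃ + 3 * P8 x₄ = 23 :=
  ⟨-1, -1, 0, 1, by norm_num [P8]⟩

lemma tab_24 : ∃ x₁ x₂ x₃ x₄ : ℤ, 2 * P8 x₁ + 2 * P8 x₂ + 3 * P8 x₃ + 3 * P8 x₄ = 24 :=
  ⟨0, 0, 0, 2, by norm_num [P8]⟩

lemma tab_26 : ∃ x₁ x₂ x₃ x₄ : ℤ, 2 * P8 x₁ + 2 * P8 x₂ + 3 * P8 x₃ + 3 * P8 x₄ = 26 :=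
  ⟨-1, -1, 1, 1, by norm_num [P8]⟩

lemma tab_27 : ∃ x₁ x₂ x₃ x₄ : ℤ, 2 * P8 x₁ + 2 * P8 x₂ + 3 * P8 x₃ + 3 * P8 x₄ = 27 :=
  ⟨-1, 1, -1, 0, by norm_num [P8]⟩

lemma tab_28 : ∃ x₁ x₂ x₃ x₄ : ℤ, 2 * P8 x₁ + 2 * P8 x₂ + 3 * P8 x₃ + 3 * P8 x₄ = 28 :=
  ⟨-1, 0, -1, 1, by norm_num [P8]⟩

lemma tab_30 : ∃ x₁ x₂ x₃ x₄ : ℤ, 2 * P8 x₁ + 2 * P8 x₂ + 3 * P8 x₃ + 3 * P8 x₄ = 30 :=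
  ⟨-1, 1, -1, 1, by norm_num [P8]⟩

lemma tab_31 : ∃ x₁ x₂ x₃ x₄ : ℤ, 2 * P8 x₁ + 2 * P8 x₂ + 3 * P8 x₃ + 3 * P8 x₄ = 31 :=
  ⟨0, 2, -1, 0, by norm_num [P8]⟩

lemma tab_32 : ∃ x₁ x₂ x₃ x₄ : ℤ, 2 * P8 x₁ + 2 * P8 x₂ + 3 * P8 x₃ + 3 * P8 x₄ = 32 :=
  ⟨-2, 0, 0, 0, by norm_num [P8]⟩

lemma tab_34 : ∃ x₁ x₂ x₃ x₄ : ℤ, 2 * P8 x₁ + 2 * P8 x₂ + 3 * P8 x₃ + 3 * P8 x₄ = 34 :=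
  ⟨-2, 1, 0, 0, by norm_num [P8]⟩

lemma tab_35 : ∃ x₁ x₂ x₃ x₄ : ℤ, 2 * P8 x₁ + 2 * P8 x₂ + 3 * P8 x₃ + 3 * P8 x₄ = 35 :=
  ⟨-2, 0, 0, 1, by norm_num [P8]⟩

lemma tab_36 : ∃ x₁ x₂ x₃ x₄ : ℤ, 2 * P8 x₁ + 2 * P8 x₂ + 3 * P8 x₃ + 3 * P8 x₄ = 36 :=
  ⟨-1, 1, 0, 2, by norm_num [P8]⟩

lemma tab_38 : ∃ x₁ x₂ x₃ x₄ : ℤ, 2 * P8 x₁ + 2 * P8 x₂ + 3 * P8 x₃ + 3 * P8 x₄ = 38 :=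
  ⟨-2, 0, 1, 1, by norm_num [P8]⟩

lemma tab_39 : ∃ x₁ x₂ x₃ x₄ : ℤ, 2 * P8 x₁ + 2 * P8 x₂ + 3 * P8 x₃ + 3 * P8 x₄ = 39 :=
  ⟨-1, 1, 1, 2, by norm_num [P8]⟩

lemma tab_40 : ∃ x₁ x₂ x₃ x₄ : ℤ, 2 * P8 x₁ + 2 * P8 x₂ + 3 * P8 x₃ + 3 * P8 x₄ = 40 :=
  ⟨-2, 1, 1, 1, by norm_num [P8]⟩

lemma tab_42 : ∃ x₁ x₂ x₃ x₄ : ℤ, 2 * P8 x₁ + 2 * P8 x₂ + 3 * P8 x₃ + 3 * P8 x₄ = 42 :=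
  ⟨-2, -1, 0, 0, by norm_num [P8]⟩

lemma tab_43 : ∃ x₁ x₂ x₃ x₄ : ℤ, 2 * P8 x₁ + 2 * P8 x₂ + 3 * P8 x₃ + 3 * P8 x₄ = 43 :=
  ⟨0, 2, 1, 2, by norm_num [P8]⟩

lemma tab_44 : ∃ x₁ x₂ x₃ x₄ : ℤ, 2 * P8 x₁ + 2 * P8 x₂ + 3 * P8 x₃ + 3 * P8 x₄ = 44 :=
  ⟨-1, -1, 0, 2, by norm_num [P8]⟩

lemma tab_46 : ∃ x₁ x₂ x₃ x₄ : ℤ, 2 * P8 x₁ + 2 * P8 x₂ + 3 * P8 x₃ + 3 * P8 x₄ = 46 :=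
  ⟨0, 2, -1, -1, by norm_num [P8]⟩

lemma tab_47 : ∃ x₁ x₂ x₃ x₄ : ℤ, 2 * P8 x₁ + 2 * P8 x₂ + 3 * P8 x₃ + 3 * P8 x₄ = 47 :=
  ⟨-2, 0, -1, 0, by norm_num [P8]⟩

lemma tab_48 : ∃ x₁ x₂ x₃ x₄ : ℤ, 2 * P8 x₁ + 2 * P8 x₂ + 3 * P8 x₃ + 3 * P8 x₄ = 48 :=
  ⟨-2, -1, 1, 1, by norm_num [P8]⟩

lemma tab_50 : ∃ x₁ x₂ x₃ x₄ : ℤ, 2 * P8 x₁ + 2 * P8 x₂ + 3 * P8 x₃ + 3 * P8 x₄ = 50 :=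
  ⟨-2, 0, -1, 1, by norm_num [P8]⟩

lemma tab_51 : ∃ x₁ x₂ x₃ x₄ : ℤ, 2 * P8 x₁ + 2 * P8 x₂ + 3 * P8 x₃ + 3 * P8 x₄ = 51 :=
  ⟨-2, 2, 0, 1, by norm_num [P8]⟩

lemma tab_52 : ∃ x₁ x₂ x₃ x₄ : ℤ, 2 * P8 x₁ + 2 * P8 x₂ + 3 * P8 x₃ + 3 * P8 x₄ = 52 :=
  ⟨-2, 1, -1, 1, by norm_num [P8]⟩

lemma tab_54 : ∃ x₁ x₂ x₃ x₄ : ℤ, 2 * P8 x₁ + 2 * P8 x₂ + 3 * P8 x₃ + 3 * P8 x₄ = 54 :=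
  ⟨-2, 2, 1, 1, by norm_num [P8]⟩

lemma tab_55 : ∃ x₁ x₂ x₃ x₄ : ℤ, 2 * P8 x₁ + 2 * P8 x₂ + 3 * P8 x₃ + 3 * P8 x₄ = 55 :=
  ⟨-1, 3, 0, 1, by norm_num [P8]⟩

lemma tab_56 : ∃ x₁ x₂ x₃ x₄ : ℤ, 2 * P8 x₁ + 2 * P8 x₂ + 3 * P8 x₃ + 3 * P8 x₄ = 56 :=
  ⟨-2, 0, 0, 2, by norm_num [P8]⟩

lemma tab_58 : ∃ x₁ x₂ x₃ x₄ : ℤ, 2 * P8 x₁ + 2 * P8 x₂ + 3 * P8 x₃ + 3 * P8 x₄ = 58 :=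
  ⟨-2, 1, 0, 2, by norm_num [P8]⟩

lemma tab_59 : ∃ x₁ x₂ x₃ x₄ : ℤ, 2 * P8 x₁ + 2 * P8 x₂ + 3 * P8 x₃ + 3 * P8 x₄ = 59 :=
  ⟨-2, 0, 1, 2, by norm_num [P8]⟩

lemma tab_60 : ∃ x₁ x₂ x₃ x₄ : ℤ, 2 * P8 x₁ + 2 * P8 x₂ + 3 * P8 x₃ + 3 * P8 x₄ = 60 :=
  ⟨-2, -1, -1, 1, by norm_num [P8]⟩

lemma tab_62 : ∃ x₁ x₂ x₃ x₄ : ℤ, 2 * P8 x₁ + 2 * P8 x₂ + 3 * P8 x₃ + 3 * P8 x₄ = 62 :=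
  ⟨-2, 0, -1, -1, by norm_num [P8]⟩

lemma tab_63 : ∃ x₁ x₂ x₃ x₄ : ℤ, 2 * P8 x₁ + 2 * P8 x₂ + 3 * P8 x₃ + 3 * P8 x₄ = 63 :=
  ⟨-2, 2, -1, 0, by norm_num [P8]⟩

lemma tab_64 : ∃ x₁ x₂ x₃ x₄ : ℤ, 2 * P8 x₁ + 2 * P8 x₂ + 3 * P8 x₃ + 3 * P8 x₄ = 64 :=
  ⟨-2, -2, 0, 0, by norm_num [P8]⟩

lemma tab_66 : ∃ x₁ x₂ x₃ x₄ : ℤ, 2 * P8 x₁ + 2 * P8 x₂ + 3 * P8 x₃ + 3 * P8 x₄ = 66 :=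
  ⟨-3, 0, 0, 0, by norm_num [P8]⟩

lemma tab_67 : ∃ x₁ x₂ x₃ x₄ : ℤ, 2 * P8 x₁ + 2 * P8 x₂ + 3 * P8 x₃ + 3 * P8 x₄ = 67 :=
  ⟨-2, -2, 0, 1, by norm_num [P8]⟩

lemma tab_68 : ∃ x₁ x₂ x₃ x₄ : ℤ, 2 * P8 x₁ + 2 * P8 x₂ + 3 * P8 x₃ + 3 * P8 x₄ = 68 :=
  ⟨-3, 1, 0, 0, by norm_num [P8]⟩

lemma tab_70 : ∃ x₁ x₂ x₃ x₄ : ℤ, 2 * P8 x₁ + 2 * P8 x₂ + 3 * P8 x₃ + 3 * P8 x₄ = 70 :=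
  ⟨-2, -2, 1, 1, by norm_num [P8]⟩

lemma tab_71 : ∃ x₁ x₂ x₃ x₄ : ℤ, 2 * P8 x₁ + 2 * P8 x₂ + 3 * P8 x₃ + 3 * P8 x₄ = 71 :=
  ⟨-3, 1, 0, 1, by norm_num [P8]⟩

lemma tab_72 : ∃ x₁ x₂ x₃ x₄ : ℤ, 2 * P8 x₁ + 2 * P8 x₂ + 3 * P8 x₃ + 3 * P8 x₄ = 72 :=
  ⟨-3, 0, 1, 1, by norm_num [P8]⟩

lemma tab_74 : ∃ x₁ x₂ x₃ x₄ : ℤ, 2 * P8 x₁ + 2 * P8 x₂ + 3 * P8 x₃ + 3 * P8 x₄ = 74 :=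
  ⟨-3, 1, 1, 1, by norm_num [P8]⟩

lemma tab_75 : ∃ x₁ x₂ x₃ x₄ : ℤ, 2 * P8 x₁ + 2 * P8 x₂ + 3 * P8 x₃ + 3 * P8 x₄ = 75 :=
  ⟨-2, 2, 1, 2, by norm_num [P8]⟩

lemma tab_76 : ∃ x₁ x₂ x₃ x₄ : ℤ, 2 * P8 x₁ + 2 * P8 x₂ + 3 * P8 x₃ + 3 * P8 x₄ = 76 :=
  ⟨-3, -1, 0, 0, by norm_num [P8]⟩

lemma tab_78 : ∃ x₁ x₂ x₃ x₄ : ℤ, 2 * P8 x₁ + 2 * P8 x₂ + 3 * P8 x₃ + 3 * P8 x₄ = 78 :=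
  ⟨-2, 2, -1, -1, by norm_num [P8]⟩

lemma tab_79 : ∃ x₁ x₂ x₃ x₄ : ℤ, 2 * P8 x₁ + 2 * P8 x₂ + 3 * P8 x₃ + 3 * P8 x₄ = 79 :=
  ⟨-3, -1, 0, 1, by norm_num [P8]⟩

lemma tab_80 : ∃ x₁ x₂ x₃ x₄ : ℤ, 2 * P8 x₁ + 2 * P8 x₂ + 3 * P8 x₃ + 3 * P8 x₄ = 80 :=
  ⟨-2, 0, -2, 0, by norm_num [P8]⟩

lemma tab_82 : ∃ x₁ x₂ x₃ x₄ : ℤ, 2 * P8 x₁ + 2 * P8 x₂ + 3 * P8 x₃ + 3 * P8 x₄ = 82 :=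
  ⟨-3, -1, 1, 1, by norm_num [P8]⟩

lemma tab_83 : ∃ x₁ x₂ x₃ x₄ : ℤ, 2 * P8 x₁ + 2 * P8 x₂ + 3 * P8 x₃ + 3 * P8 x₄ = 83 :=
  ⟨-3, 1, -1, 0, by norm_num [P8]⟩

lemma tab_84 : ∃ x₁ x₂ x₃ x₄ : ℤ, 2 * P8 x₁ + 2 * P8 x₂ + 3 * P8 x₃ + 3 * P8 x₄ = 84 :=
  ⟨-3, 0, -1, 1, by norm_num [P8]⟩

lemma tab_86 : ∃ x₁ x₂ x₃ x₄ : ℤ, 2 * P8 x₁ + 2 * P8 x₂ + 3 * P8 x₃ + 3 * P8 x₄ = 86 :=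
  ⟨-3, 1, -1, 1, by norm_num [P8]⟩

lemma tab_87 : ∃ x₁ x₂ x₃ x₄ : ℤ, 2 * P8 x₁ + 2 * P8 x₂ + 3 * P8 x₃ + 3 * P8 x₄ = 87 :=
  ⟨-2, 2, -1, 2, by norm_num [P8]⟩

lemma tab_88 : ∃ x₁ x₂ x₃ x₄ : ℤ, 2 * P8 x₁ + 2 * P8 x₂ + 3 * P8 x₃ + 3 * P8 x₄ = 88 :=
  ⟨-3, 2, 1, 1, by norm_num [P8]⟩

lemma tab_90 : ∃ x₁ x₂ x₃ x₄ : ℤ, 2 * P8 x₁ + 2 * P8 x₂ + 3 * P8 x₃ + 3 * P8 x₄ = 90 :=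
  ⟨-3, 0, 0, 2, by norm_num [P8]⟩

lemma tab_91 : ∃ x₁ x₂ x₃ x₄ : ℤ, 2 * P8 x₁ + 2 * P8 x₂ + 3 * P8 x₃ + 3 * P8 x₄ = 91 :=
  ⟨-3, -1, -1, 0, by norm_num [P8]⟩

lemma tab_92 : ∃ x₁ x₂ x₃ x₄ : ℤ, 2 * P8 x₁ + 2 * P8 x₂ + 3 * P8 x₃ + 3 * P8 x₄ = 92 :=
  ⟨-3, 1, 0, 2, by norm_num [P8]⟩

lemma tab_94 : ∃ x₁ x₂ x₃ x₄ : ℤ, 2 * P8 x₁ + 2 * P8 x₂ + 3 * P8 x₃ + 3 * P8 x₄ = 94 :=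
  ⟨-3, -1, -1, 1, by norm_num [P8]⟩

lemma tab_95 : ∃ x₁ x₂ x₃ x₄ : ℤ, 2 * P8 x₁ + 2 * P8 x₂ + 3 * P8 x₃ + 3 * P8 x₄ = 95 :=
  ⟨-3, 1, 1, 2, by norm_num [P8]⟩

lemma tab_96 : ∃ x₁ x₂ x₃ x₄ : ℤ, 2 * P8 x₁ + 2 * P8 x₂ + 3 * P8 x₃ + 3 * P8 x₄ = 96 :=
  ⟨-3, 0, -1, -1, by norm_num [P8]⟩

lemma tab_98 : ∃ x₁ x₂ x₃ x₄ : ℤ, 2 * P8 x₁ + 2 * P8 x₂ + 3 * P8 x₃ + 3 * P8 x₄ = 98 :=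
  ⟨-3, -2, 0, 0, by norm_num [P8]⟩

lemma tab_99 : ∃ x₁ x₂ x₃ x₄ : ℤ, 2 * P8 x₁ + 2 * P8 x₂ + 3 * P8 x₃ + 3 * P8 x₄ = 99 :=
  ⟨-2, 2, -2, 1, by norm_num [P8]⟩

lemma tab_100 : ∃ x₁ x₂ x₃ x₄ : ℤ, 2 * P8 x₁ + 2 * P8 x₂ + 3 * P8 x₃ + 3 * P8 x₄ = 100 :=
  ⟨-3, -1, 0, 2, by norm_num [P8]⟩

lemma tab_102 : ∃ x₁ x₂ x₃ x₄ : ℤ, 2 * P8 x₁ + 2 * P8 x₂ + 3 * P8 x₃ + 3 * P8 x₄ = 102 :=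
  ⟨0, 0, -3, 1, by norm_num [P8]⟩

lemma tab_103 : ∃ x₁ x₂ x₃ x₄ : ℤ, 2 * P8 x₁ + 2 * P8 x₂ + 3 * P8 x₃ + 3 * P8 x₄ = 103 :=
  ⟨-3, -1, 1, 2, by norm_num [P8]⟩

lemma tab_104 : ∃ x₁ x₂ x₃ x₄ : ℤ, 2 * P8 x₁ + 2 * P8 x₂ + 3 * P8 x₃ + 3 * P8 x₄ = 104 :=
  ⟨-3, -2, 1, 1, by norm_num [P8]⟩

lemma tab_106 : ∃ x₁ x₂ x₃ x₄ : ℤ, 2 * P8 x₁ + 2 * P8 x₂ + 3 * P8 x₃ + 3 * P8 x₄ = 106 :=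
  ⟨-3, -1, -1, -1, by norm_num [P8]⟩

lemma tab_107 : ∃ x₁ x₂ x₃ x₄ : ℤ, 2 * P8 x₁ + 2 * P8 x₂ + 3 * P8 x₃ + 3 * P8 x₄ = 107 :=
  ⟨-3, 1, -1, 2, by norm_num [P8]⟩

lemma tab_108 : ∃ x₁ x₂ x₃ x₄ : ℤ, 2 * P8 x₁ + 2 * P8 x₂ + 3 * P8 x₃ + 3 * P8 x₄ = 108 :=
  ⟨-3, 3, 0, 0, by norm_num [P8]⟩

lemma tab_110 : ∃ x₁ x₂ x₃ x₄ : ℤ, 2 * P8 x₁ + 2 * P8 x₂ + 3 * P8 x₃ + 3 * P8 x₄ = 110 :=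
  ⟨-2, 0, -1, 3, by norm_num [P8]⟩

set_option maxHeartbeats 4000000 in
lemma table (u : ℤ) (h0 : 0 < u) (h1 : u ≤ 110) (h2 : u % 4 ≠ 1) (h3 : u ≠ 11)
    (h4 : u ≠ 14) :
    ∃ x₁ x₂ x₃ x₄ : ℤ, 2 * P8 x₁ + 2 * P8 x₂ + 3 * P8 x₃ + 3 * P8 x₄ = u := by
  interval_cases u <;> first
    | omega
    | exact tab_2
    | exact tab_3
    | exact tab_4
    | exact tab_6
    | exact tab_7
    | exact tab_8
    | exact tab_10
    | exact tab_12
    | exact tab_15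
    | exact tab_16
    | exact tab_18
    | exact tab_19
    | exact tab_20
    | exact tab_22
    | exact tab_23
    | exact tab_24
    | exact tab_26
    | exact tab_27
    | exact tab_28
    | exact tab_30
    | exact tab_31
    | exact tab_32
    | exact tab_34
    | exact tab_35
    | exact tab_36
    | exact tab_38
    | exact tab_39
    | exact tab_40
    | exact tab_42
    | exact tab_43
    | exact tab_44
    | exact tab_46
    | exact tab_47
    | exact tab_48
    | exact tab_50
    | exact tab_51
    | exact tab_52
    | exact tab_54
    | exact tab_55
    | exact tab_56
    | exact tab_58
    | exact tab_59
    | exact tab_60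
    | exact tab_62
    | exact tab_63
    | exact tab_64
    | exact tab_66
    | exact tab_67
    | exact tab_68
    | exact tab_70
    | exact tab_71
    | exact tab_72
    | exact tab_74
    | exact tab_75
    | exact tab_76
    | exact tab_78
    | exact tab_79
    | exact tab_80
    | exact tab_82
    | exact tab_83
    | exact tab_84
    | exact tab_86
    | exact tab_87
    | exact tab_88
    | exact tab_90
    | exact tab_91
    | exact tab_92
    | exact tab_94
    | exact tab_95
    | exact tab_96
    | exact tab_98
    | exact tab_99
    | exact tab_100
    | exact tab_102
    | exact tab_103
    | exact tab_104
    | exact tab_106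
    | exact tab_107
    | exact tab_108
    | exact tab_110

/-- common tail for the even and odd branches -/
lemma main_tail (u s S2 : ℤ) (hsq : s^2 = S2) (hs2 : s % 2 = 0) (hs3 : ¬(3:ℤ) ∣ s)
    (hm9 : (3*u+10 - S2) % 9 = 6) (h6 : S2 + 6 ≤ 3*u+10)
    (hforce : (3*u+10 - S2) % 4 = 2 ∨ (3*u+10 - S2) % 8 = 3) :
    ∃ x₁ x₂ x₃ x₄ : ℤ, 2 * P8 x₁ + 2 * P8 x₂ + 3 * P8 x₃ + 3 * P8 x₄ = u := by
  obtain ⟨g, c, d, m, hrep, h3c, h3d, hcdg, hm⟩ := build_rep (3*u+10) s S2 hsq hm9 h6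
  have hgeven : g % 2 = 0 := g_even m c d g hcdg (by omega)
  exact oct_of_good u s g c d (by linarith [hrep]) (by omega) hs3 h3c h3d


end Oct

theorem rep_p8_2233 (u : ℤ) (hu : 0 < u) (hmod : u % 4 ≠ 1)
    (h11 : u ≠ 11) (h14 : u ≠ 14) :
    ∃ x₁ x₂ x₃ x₄ : ℤ, 2 * P8 x₁ + 2 * P8 x₂ + 3 * P8 x₃ + 3 * P8 x₄ = u := by
  by_cases hble : u ≤ 110
  · exact Oct.table u hu hble hmod h11 h14
  · push_neg at hble
    have hu4 : u % 4 = 0 ∨ u % 4 = 2 ∨ u % 4 = 3 := by omega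
    rcases hu4 with h4 | h4 | h4
    · -- N ≡ 2 mod 4 : even branch
      have h9 : (3*u+10) % 9 = 1 ∨ (3*u+10) % 9 = 4 ∨ (3*u+10) % 9 = 7 := by omega
      obtain ⟨s, S2, hsq, hs2, hs3, hm9, h6, hforce⟩ :
          ∃ s S2 : ℤ, s^2 = S2 ∧ s % 2 = 0 ∧ ¬(3:ℤ) ∣ s ∧ (3*u+10 - S2) % 9 = 6 ∧
            S2 + 6 ≤ 3*u+10 ∧ ((3*u+10 - S2) % 4 = 2 ∨ (3*u+10 - S2) % 8 = 3) := by
        rcases h9 with h|h|h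
        · exact ⟨2, 4, by norm_num, by norm_num, by omega, by omega, by omega, by omega⟩
        · exact ⟨4, 16, by norm_num, by norm_num, by omega, by omega, by omega, by omega⟩
        · exact ⟨8, 64, by norm_num, by norm_num, by omega, by omega, by omega, by omega⟩
      exact Oct.main_tail u s S2 hsq hs2 hs3 hm9 h6 hforce
    · -- N ≡ 0 mod 4 : descend to N/4
      obtain ⟨N', hN'⟩ : (4:ℤ) ∣ (3*u+10) := by omega
      have hN'9 : N' % 9 = 1 ∨ N' % 9 = 4 ∨ N' % 9 = 7 := by omega
      obtain ⟨s, S2, hsq, hs3, hm9, h6⟩ :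
          ∃ s S2 : ℤ, s^2 = S2 ∧ ¬(3:ℤ) ∣ s ∧ (N' - S2) % 9 = 6 ∧ S2 + 6 ≤ N' := by
        rcases hN'9 with h|h|h
        · exact ⟨2, 4, by norm_num, by omega, by omega, by omega⟩
        · exact ⟨4, 16, by norm_num, by omega, by omega, by omega⟩
        · exact ⟨1, 1, by norm_num, by omega, by omega, by omega⟩
      obtain ⟨g, c, d, m, hrep, h3c, h3d, hcdg, hm⟩ := Oct.build_rep N' s S2 hsq hm9 h6
      refine Oct.oct_of_good u (2*s) (2*g) (2*c) (2*d) ?_ (by omega) (by omega) (by omega)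
        (by omega)
      linear_combination hN' + 4*hrep
    · -- N odd : odd branch
      have h8 : (3*u+10) % 8 = 3 ∨ (3*u+10) % 8 = 7 := by omega
      have h9 : (3*u+10) % 9 = 1 ∨ (3*u+10) % 9 = 4 ∨ (3*u+10) % 9 = 7 := by omega
      obtain ⟨s, S2, hsq, hs2, hs3, hm9, h6, hforce⟩ :
          ∃ s S2 : ℤ, s^2 = S2 ∧ s % 2 = 0 ∧ ¬(3:ℤ) ∣ s ∧ (3*u+10 - S2) % 9 = 6 ∧
            S2 + 6 ≤ 3*u+10 ∧ ((3*u+10 - S2) % 4 = 2 ∨ (3*u+10 - S2) % 8 = 3) := by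
        rcases h8 with h8' | h8' <;> rcases h9 with h|h|h
        · exact ⟨16, 256, by norm_num, by norm_num, by omega, by omega, by omega, by omega⟩
        · exact ⟨4, 16, by norm_num, by norm_num, by omega, by omega, by omega, by omega⟩
        · exact ⟨8, 64, by norm_num, by norm_num, by omega, by omega, by omega, by omega⟩
        · exact ⟨2, 4, by norm_num, by norm_num, by omega, by omega, by omega, by omega⟩
        · exact ⟨14, 196, by norm_num, by norm_num, by omega, by omega, by omega, by omega⟩
        · exact ⟨10, 100, by norm_num, by norm_num, by omega, by omega, by omega, by omega⟩
      exact Oct.main_tail u s S2 hsq hs2 hs3 hm9 h6 hforce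
end
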